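/- arXiv:1702.00602 — 6 statements merged into one kernel-verified Lean document; each statement's English description precedes it below -/
import Mathlib

section
/- For every positive integer $d$, every $\tau > 0$, and every $s > 1/(2 + 1/\tau)$, the pair $(\tau, s)$ is not a John–Strömberg pair for the collection of all axis-parallel cubes in $\mathbb{R}^d$. That is, there exist a cube $Q$ and disjoint measurable subsets $E_+, E_-$ of $Q$ with $\min\{\lambda(E_+), \lambda(E_-)\} > \tau \lambda(Q \setminus E_+ \setminus E_-)$ such that no cube $W \subseteq Q$ satisfies $\min\{\lambda(E_+ \cap W), \lambda(E_- \cap W)\} \ge s \lambda(W)$. -/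
/-!
Take `Q = [0,1]^d` and let `E₊`, `E₋` be the slabs `x₀ ≤ a` and `x₀ ≥ 1 - a` of `Q`, where
`τ / (2τ + 1) < a < min s (1/2)`; the hypothesis on `(E₊, E₋)` is then `a > τ (1 - 2a)`.
A cube `W ⊆ Q` of side `l` meets the slabs in sets of volume `p lᵈ⁻¹` and `m lᵈ⁻¹`, where
`p`, `m` are the lengths of the parts of its first edge lying in `[0, a]` and `[1 - a, 1]`.
If both parts are nonempty, the edge crosses the gap `(a, 1 - a)`, so
`p + m ≤ l - (1 - 2a) ≤ 2al`. Hence `min(p, m) ≤ a l < s l`, and no cube `W` has the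
required property.
-/

open MeasureTheory Set

/-- A closed axis-parallel cube in `ℝ^d` with positive side length. -/
def IsCube {d : ℕ} (Q : Set (Fin d → ℝ)) : Prop :=
  ∃ (a : Fin d → ℝ) (l : ℝ), 0 < l ∧ Q = Set.univ.pi fun j => Set.Icc (a j) (a j + l)

/-- `(τ, s)` is a John–Strömberg pair for the collection of all cubes in `ℝ^d`. -/
def IsJSPair (d : ℕ) (τ s : ℝ) : Prop :=
  0 < τ ∧ 0 < s ∧
    ∀ Q : Set (Fin d → ℝ), IsCube Q →
      ∀ Ep Em : Set (Fin d → ℝ), MeasurableSet Ep → MeasurableSet Em →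
        Ep ⊆ Q → Em ⊆ Q → Disjoint Ep Em →
        min (volume Ep) (volume Em) > ENNReal.ofReal τ * volume ((Q \ Ep) \ Em) →
        ∃ W : Set (Fin d → ℝ), IsCube W ∧ W ⊆ Q ∧
          min (volume (Ep ∩ W)) (volume (Em ∩ W)) ≥ ENNReal.ofReal s * volume W

open Function

theorem MeasureTheory.Measure.pi_univ_pi_update {ι : Type*} [Fintype ι] [DecidableEq ι]
    {α : ι → Type*} [∀ j, MeasurableSpace (α j)] (μ : ∀ j, Measure (α j)) [∀ j, SigmaFinite (μ j)]
    (t : ∀ j, Set (α j)) (i : ι) (A : Set (α i)) :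
    Measure.pi μ (univ.pi (update t i A)) = μ i A * ∏ j ∈ Finset.univ.erase i, μ j (t j) := by
  rw [Measure.pi_pi]
  simp only [apply_update (fun j => μ j)]
  rw [Finset.prod_update_of_mem (Finset.mem_univ i), Finset.sdiff_singleton_eq_erase]

theorem min_sub_le_mul_sub {a c e : ℝ} (ha0 : 0 ≤ a) (ha : a ≤ 1 / 2) (hc : 0 ≤ c) :
    min (min a e - c) (e - max (1 - a) c) ≤ a * (e - c) := by
  simp only [min_def, max_def]
  split_ifs <;> nlinarith

theorem min_volume_inter_Icc_le {a c e : ℝ} (ha0 : 0 ≤ a) (ha : a ≤ 1 / 2) (hc : 0 ≤ c)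
    (he : e ≤ 1) :
    min (volume (Icc 0 a ∩ Icc c e)) (volume (Icc (1 - a) 1 ∩ Icc c e)) ≤
      ENNReal.ofReal a * volume (Icc c e) := by
  rw [Icc_inter_Icc, Icc_inter_Icc, max_eq_right hc, min_eq_right he, Real.volume_Icc,
    Real.volume_Icc, Real.volume_Icc, ← ENNReal.ofReal_min, ← ENNReal.ofReal_mul ha0]
  exact ENNReal.ofReal_le_ofReal (min_sub_le_mul_sub ha0 ha hc)

section Slab

variable {ι : Type*} [DecidableEq ι]

def unitCubeSlab (i : ι) (I : Set ℝ) : Set (ι → ℝ) :=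
  univ.pi (update (fun _ => Icc 0 1) i I)

theorem mem_unitCubeSlab {i : ι} {I : Set ℝ} {x : ι → ℝ} :
    x ∈ unitCubeSlab i I ↔ x i ∈ I ∧ ∀ j ≠ i, x j ∈ Icc (0 : ℝ) 1 := by
  simp only [unitCubeSlab, mem_univ_pi]
  exact forall_update_iff _ (fun j (S : Set ℝ) => x j ∈ S)

theorem unitCubeSlab_Icc_zero_one (i : ι) : unitCubeSlab i (Icc 0 1) = Icc 0 1 := by
  rw [unitCubeSlab, update_eq_self_iff.2 rfl]
  exact pi_univ_Icc 0 1

theorem unitCubeSlab_mono (i : ι) {I J : Set ℝ} (h : I ⊆ J) :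
    unitCubeSlab i I ⊆ unitCubeSlab i J := fun _ hx =>
  mem_unitCubeSlab.2 ⟨h (mem_unitCubeSlab.1 hx).1, (mem_unitCubeSlab.1 hx).2⟩

theorem unitCubeSlab_diff (i : ι) (I J : Set ℝ) :
    unitCubeSlab i I \ unitCubeSlab i J = unitCubeSlab i (I \ J) := by
  ext x
  simp only [mem_sdiff, mem_unitCubeSlab]
  tauto

theorem disjoint_unitCubeSlab (i : ι) {I J : Set ℝ} (h : Disjoint I J) :
    Disjoint (unitCubeSlab i I) (unitCubeSlab i J) :=
  disjoint_left.2 fun _ hI hJ =>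
    disjoint_left.1 h (mem_unitCubeSlab.1 hI).1 (mem_unitCubeSlab.1 hJ).1

theorem unitCubeSlab_inter_pi {u : ι → Set ℝ} (hu : ∀ j, u j ⊆ Icc 0 1) (i : ι)
    (I : Set ℝ) :
    unitCubeSlab i I ∩ univ.pi u = univ.pi (update u i (I ∩ u i)) := by
  rw [unitCubeSlab, ← pi_inter_distrib]
  congr 1
  funext j
  rcases eq_or_ne j i with rfl | hj
  · simp
  · simp [hj, inter_eq_right.2 (hu j)]

variable [Fintype ι]

theorem measurableSet_unitCubeSlab (i : ι) {I : Set ℝ} (hI : MeasurableSet I) :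
    MeasurableSet (unitCubeSlab i I) :=
  MeasurableSet.univ_pi fun j => by
    rcases eq_or_ne j i with rfl | hj
    · simpa using hI
    · simp [hj]

theorem volume_unitCubeSlab (i : ι) (I : Set ℝ) : volume (unitCubeSlab i I) = volume I := by
  rw [unitCubeSlab, volume_pi, Measure.pi_univ_pi_update]
  simp [Real.volume_Icc]

theorem volume_unitCubeSlab_inter_pi {u : ι → Set ℝ} (hu : ∀ j, u j ⊆ Icc 0 1) (i : ι)
    (I : Set ℝ) :
    volume (unitCubeSlab i I ∩ univ.pi u) =
      volume (I ∩ u i) * ∏ j ∈ Finset.univ.erase i, volume (u j) := by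
  rw [unitCubeSlab_inter_pi hu, volume_pi, Measure.pi_univ_pi_update]

end Slab

theorem isCube_Icc_zero_one {d : ℕ} : IsCube (Icc (0 : Fin d → ℝ) 1) :=
  ⟨0, 1, one_pos, by simpa using (pi_univ_Icc (0 : Fin d → ℝ) 1).symm⟩

theorem IsCube.volume_ne_zero {d : ℕ} {W : Set (Fin d → ℝ)} (hW : IsCube W) :
    volume W ≠ 0 := by
  obtain ⟨c, l, hl, rfl⟩ := hW
  rw [volume_pi_pi]
  simp [Real.volume_Icc, hl]

theorem IsCube.volume_ne_top {d : ℕ} {W : Set (Fin d → ℝ)} (hW : IsCube W) :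
    volume W ≠ ⊤ := by
  obtain ⟨c, l, -, rfl⟩ := hW
  exact (isCompact_univ_pi fun _ => isCompact_Icc).measure_ne_top

theorem volume_unitCube_diff_slabs_le {ι : Type*} [Fintype ι] [DecidableEq ι] (i : ι)
    (a : ℝ) :
    volume ((Icc 0 1 \ unitCubeSlab i (Icc 0 a)) \ unitCubeSlab i (Icc (1 - a) 1)) ≤
      ENNReal.ofReal (1 - 2 * a) := by
  rw [← unitCubeSlab_Icc_zero_one i, unitCubeSlab_diff, unitCubeSlab_diff, volume_unitCubeSlab]
  calc volume ((Icc 0 1 \ Icc 0 a) \ Icc (1 - a) 1)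
      ≤ volume (Icc a (1 - a)) := measure_mono fun x ⟨⟨⟨hx0, hx1⟩, hxa⟩, hxa'⟩ =>
        ⟨(not_le.1 fun h => hxa ⟨hx0, h⟩).le, (not_le.1 fun h => hxa' ⟨h, hx1⟩).le⟩
    _ = ENNReal.ofReal (1 - 2 * a) := by rw [Real.volume_Icc]; ring_nf

theorem ofReal_mul_volume_unitCube_diff_slabs_lt {ι : Type*} [Fintype ι] [DecidableEq ι]
    (i : ι) {τ a : ℝ} (hτ : 0 ≤ τ) (ha0 : 0 < a) (hgap : τ * (1 - 2 * a) < a) :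
    ENNReal.ofReal τ * volume ((Icc 0 1 \ unitCubeSlab i (Icc 0 a)) \
        unitCubeSlab i (Icc (1 - a) 1)) <
      min (volume (unitCubeSlab i (Icc 0 a))) (volume (unitCubeSlab i (Icc (1 - a) 1))) :=
  calc ENNReal.ofReal τ * volume ((Icc 0 1 \ unitCubeSlab i (Icc 0 a)) \
        unitCubeSlab i (Icc (1 - a) 1))
      ≤ ENNReal.ofReal (τ * (1 - 2 * a)) := by
        rw [ENNReal.ofReal_mul hτ]
        gcongr
        exact volume_unitCube_diff_slabs_le i a
    _ < ENNReal.ofReal a := (ENNReal.ofReal_lt_ofReal_iff ha0).2 hgap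
    _ = _ := by simp [volume_unitCubeSlab, Real.volume_Icc]

theorem min_volume_unitCubeSlab_inter_le {d : ℕ} (i : Fin d) {a : ℝ} (ha0 : 0 ≤ a)
    (ha : a ≤ 1 / 2) {W : Set (Fin d → ℝ)} (hW : IsCube W) (hWQ : W ⊆ Icc 0 1) :
    min (volume (unitCubeSlab i (Icc 0 a) ∩ W))
        (volume (unitCubeSlab i (Icc (1 - a) 1) ∩ W)) ≤ ENNReal.ofReal a * volume W := by
  obtain ⟨c, l, hl, rfl⟩ := hW
  have hW_ne : (univ.pi fun j => Icc (c j) (c j + l)).Nonempty :=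
    ⟨c, fun j _ => ⟨le_rfl, by linarith⟩⟩
  have hu : ∀ j, Icc (c j) (c j + l) ⊆ Icc 0 1 := fun j =>
    ((pi_subset_pi_iff.1 (hWQ.trans (pi_univ_Icc 0 1).ge)).resolve_right hW_ne.ne_empty) j
      (mem_univ j)
  obtain ⟨hc, hcl⟩ := (Icc_subset_Icc_iff (by linarith)).1 (hu i)
  rw [volume_unitCubeSlab_inter_pi hu, volume_unitCubeSlab_inter_pi hu, min_mul_mul_right,
    volume_pi_pi, ← Finset.mul_prod_erase _ _ (Finset.mem_univ i), ← mul_assoc]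
  gcongr
  exact min_volume_inter_Icc_le ha0 ha hc hcl

theorem exists_slab_width {τ s : ℝ} (hτ : 0 < τ) (hs : s > 1 / (2 + 1 / τ)) :
    ∃ a, 0 < a ∧ a < 1 / 2 ∧ a < s ∧ τ * (1 - 2 * a) < a := by
  have hthr : 1 / (2 + 1 / τ) = τ / (2 * τ + 1) := by field_simp
  have hthr_half : τ / (2 * τ + 1) < 1 / 2 := by
    rw [div_lt_div_iff₀ (by linarith) two_pos]
    linarith
  obtain ⟨a, hτa, has⟩ := exists_between (lt_min (hthr ▸ hs) hthr_half)
  refine ⟨a, (div_pos hτ (by linarith)).trans hτa, has.trans_le (min_le_right _ _),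
    has.trans_le (min_le_left _ _), ?_⟩
  rw [div_lt_iff₀ (by linarith)] at hτa
  linarith

theorem stmt_3 (d : ℕ) (hd : 1 ≤ d) (τ s : ℝ) (hτ : 0 < τ)
    (hs : s > 1 / (2 + 1 / τ)) : ¬ IsJSPair d τ s := by
  rintro ⟨-, -, H⟩
  obtain ⟨a, ha0, ha_half, has, hgap⟩ := exists_slab_width hτ hs
  let i : Fin d := ⟨0, hd⟩
  obtain ⟨W, hW, hWQ, hmin⟩ := H (Icc 0 1) isCube_Icc_zero_one _ _
    (measurableSet_unitCubeSlab i measurableSet_Icc)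
    (measurableSet_unitCubeSlab i measurableSet_Icc)
    ((unitCubeSlab_mono i (Icc_subset_Icc le_rfl (by linarith))).trans_eq
      (unitCubeSlab_Icc_zero_one i))
    ((unitCubeSlab_mono i (Icc_subset_Icc (by linarith) le_rfl)).trans_eq
      (unitCubeSlab_Icc_zero_one i))
    (disjoint_unitCubeSlab i (disjoint_left.2 fun x hx hx' => by linarith [hx.2, hx'.1]))
    (ofReal_mul_volume_unitCube_diff_slabs_lt i hτ.le ha0 hgap)
  have hsa : ENNReal.ofReal s ≤ ENNReal.ofReal a :=
    (ENNReal.mul_le_mul_iff_left hW.volume_ne_zero hW.volume_ne_top).1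
      (hmin.trans (min_volume_unitCubeSlab_inter_le i ha0.le ha_half.le hW hWQ))
  linarith [(ENNReal.ofReal_le_ofReal_iff ha0.le).1 hsa]
end

section
/- Let $d \ge 1$. If $(\tau, s)$ is a John–Strömberg pair for $\mathcal{Q}(\mathbb{R}^{d+1})$, then $(\tau, s)$ is also a John–Strömberg pair for $\mathcal{Q}(\mathbb{R}^d)$. In other words, $JS(d+1) \subseteq JS(d)$. -/
open MeasureTheory Set

/-! Lift `E₊, E₋ ⊆ Q` to `[0, l] × E₊, [0, l] × E₋ ⊆ [0, l] × Q`, where `l` is the side of `Q`: all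
measures get multiplied by `l`, so the hypothesis persists. A cube inside `[0, l] × Q` has the form
`J × W` with `W ⊆ Q` a cube, and dividing the density inequality on `J × W` by `|J|` gives the one
on `W`. -/

namespace IsJSPair

variable {d : ℕ}

def cylinder (I : Set ℝ) (S : Set (Fin d → ℝ)) : Set (Fin (d + 1) → ℝ) :=
  {x | x 0 ∈ I ∧ Fin.tail x ∈ S}

lemma cylinder_eq_preimage (I : Set ℝ) (S : Set (Fin d → ℝ)) :
    cylinder I S = MeasurableEquiv.piFinSuccAbove (fun _ => ℝ) 0 ⁻¹' I ×ˢ S := by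
  ext x
  simp [cylinder, MeasurableEquiv.piFinSuccAbove_apply]

lemma measurableSet_cylinder {I : Set ℝ} {S : Set (Fin d → ℝ)} (hI : MeasurableSet I)
    (hS : MeasurableSet S) : MeasurableSet (cylinder I S) := by
  rw [cylinder_eq_preimage]
  exact MeasurableEquiv.measurable _ (hI.prod hS)

lemma volume_cylinder (I : Set ℝ) (S : Set (Fin d → ℝ)) :
    volume (cylinder I S) = volume I * volume S := by
  rw [cylinder_eq_preimage, volume_pi,
    (measurePreserving_piFinSuccAbove (fun _ => volume) 0).measure_preimage_equiv,
    Measure.prod_prod, ← volume_pi]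

lemma min_volume_cylinder (I : Set ℝ) (S T : Set (Fin d → ℝ)) :
    min (volume (cylinder I S)) (volume (cylinder I T)) = volume I * min (volume S) (volume T) := by
  rw [volume_cylinder, volume_cylinder, mul_min]

lemma cylinder_mono {I : Set ℝ} {S T : Set (Fin d → ℝ)} (h : S ⊆ T) :
    cylinder I S ⊆ cylinder I T :=
  fun _ hx => ⟨hx.1, h hx.2⟩

lemma cylinder_inter_cylinder (I J : Set ℝ) (S T : Set (Fin d → ℝ)) :
    cylinder I S ∩ cylinder J T = cylinder (I ∩ J) (S ∩ T) :=
  Set.ext fun _ => and_and_and_comm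

lemma cylinder_diff_cylinder (I : Set ℝ) (S T : Set (Fin d → ℝ)) :
    cylinder I S \ cylinder I T = cylinder I (S \ T) := by
  ext x
  simp only [cylinder, mem_sdiff, mem_ofPred_eq]
  tauto

lemma disjoint_cylinder {I J : Set ℝ} {S T : Set (Fin d → ℝ)} (h : Disjoint S T) :
    Disjoint (cylinder I S) (cylinder J T) :=
  disjoint_left.2 fun _ hS hT => disjoint_left.1 h hS.2 hT.2

lemma subset_of_cylinder_subset {I J : Set ℝ} {S T : Set (Fin d → ℝ)} (hI : I.Nonempty)
    (hS : S.Nonempty) (h : cylinder I S ⊆ cylinder J T) : I ⊆ J ∧ S ⊆ T := by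
  rw [cylinder_eq_preimage, cylinder_eq_preimage,
    (MeasurableEquiv.surjective _).preimage_subset_preimage_iff] at h
  exact (prod_subset_prod_iff.1 h).resolve_right (by simp [hI.ne_empty, hS.ne_empty])

lemma pi_Icc_eq_cylinder (b : Fin (d + 1) → ℝ) (m : ℝ) :
    univ.pi (fun i => Icc (b i) (b i + m)) =
      cylinder (Icc (b 0) (b 0 + m)) (univ.pi fun j => Icc (b j.succ) (b j.succ + m)) := by
  ext x
  simp only [cylinder, mem_univ_pi, Fin.forall_fin_succ]
  rfl

lemma isCube_cylinder (c : ℝ) (a : Fin d → ℝ) {l : ℝ} (hl : 0 < l) :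
    IsCube (cylinder (Icc c (c + l)) (univ.pi fun j => Icc (a j) (a j + l))) :=
  ⟨Fin.cons c a, l, hl, by rw [pi_Icc_eq_cylinder]; simp only [Fin.cons_zero, Fin.cons_succ]⟩

lemma _root_.IsCube.nonempty {Q : Set (Fin d → ℝ)} (hQ : IsCube Q) : Q.Nonempty := by
  obtain ⟨a, l, hl, rfl⟩ := hQ
  exact ⟨a, fun j _ => ⟨le_rfl, by linarith⟩⟩

lemma _root_.IsCube.exists_eq_cylinder {W : Set (Fin (d + 1) → ℝ)} (hW : IsCube W) :
    ∃ c m W₀, 0 < m ∧ IsCube W₀ ∧ W = cylinder (Icc c (c + m)) W₀ := by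
  obtain ⟨b, m, hm, rfl⟩ := hW
  exact ⟨b 0, m, _, hm, ⟨_, m, hm, rfl⟩, pi_Icc_eq_cylinder b m⟩

end IsJSPair

open IsJSPair in
theorem stmt_4_general (d : ℕ) (τ s : ℝ)
    (h : IsJSPair (d + 1) τ s) : IsJSPair d τ s := by
  obtain ⟨hτ, hs, h⟩ := h
  refine ⟨hτ, hs, ?_⟩
  rintro Q ⟨a, l, hl, rfl⟩ Ep Em hEp hEm hEpQ hEmQ hdisj hmin
  set Q := univ.pi fun j => Icc (a j) (a j + l)
  set I := Icc (0 : ℝ) (0 + l)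
  have hI : volume I ≠ 0 := by simp [I, Real.volume_Icc, hl]
  have hmin' : min (volume (cylinder I Ep)) (volume (cylinder I Em)) >
      ENNReal.ofReal τ * volume ((cylinder I Q \ cylinder I Ep) \ cylinder I Em) := by
    rw [cylinder_diff_cylinder, cylinder_diff_cylinder, min_volume_cylinder, volume_cylinder,
      mul_left_comm]
    exact (ENNReal.mul_lt_mul_iff_right hI measure_Icc_lt_top.ne).2 hmin
  obtain ⟨W, hW, hWQ, hWmin⟩ := h _ (isCube_cylinder 0 a hl) _ _
    (measurableSet_cylinder measurableSet_Icc hEp) (measurableSet_cylinder measurableSet_Icc hEm)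
    (cylinder_mono hEpQ) (cylinder_mono hEmQ) (disjoint_cylinder hdisj) hmin'
  obtain ⟨c, m, W₀, hm, hW₀, rfl⟩ := hW.exists_eq_cylinder
  obtain ⟨hWI, hW₀Q⟩ := subset_of_cylinder_subset (nonempty_Icc.2 (by linarith)) hW₀.nonempty hWQ
  refine ⟨W₀, hW₀, hW₀Q, ?_⟩
  have hJ : volume (Icc c (c + m)) ≠ 0 := by simp [Real.volume_Icc, hm]
  rwa [cylinder_inter_cylinder, cylinder_inter_cylinder, inter_eq_right.2 hWI, min_volume_cylinder,
    volume_cylinder, mul_left_comm, ge_iff_le,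
    ENNReal.mul_le_mul_iff_right hJ measure_Icc_lt_top.ne] at hWmin

theorem stmt_4 (d : ℕ) (hd : 1 ≤ d) (τ s : ℝ)
    (h : IsJSPair (d + 1) τ s) : IsJSPair d τ s :=
  stmt_4_general d τ s h
end

section
/- Let $d \ge 1$ and suppose $(\tau, s)$ is a John–Strömberg pair for $\mathcal{Q}(\mathbb{R}^d)$. Then for each $\theta \in (0, s/(1-s))$, the pair $((1-\theta)\tau, \; s - \theta(1-s))$ is also a John–Strömberg pair for $\mathcal{Q}(\mathbb{R}^d)$. -/
/-!
Let `R = Q \ E₊ \ E₋` and suppose `min |E₊| |E₋| > (1 - θ) τ |R|`. We add to `E₊` a measurable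
`A ⊆ R` with `τ |R \ A| < min |E₊| |E₋|`, so that the `(τ, s)` property yields a cube `W` with
`|(E₊ ∪ A) ∩ W| ≥ s |W|` and `|E₋ ∩ W| ≥ s |W|`. If `A` is spread out enough that
`|A ∩ W| ≤ θ (1 - s) |W|` whenever `|E₋ ∩ W| ≥ s |W|`, then `|E₊ ∩ W| ≥ (s - θ (1 - s)) |W|`.

To build `A`, keep the points of `R` around which `E₋` has density at most `s / (2 · 4^d)` in
every ball of radius `≤ r`. By Lebesgue's density theorem these are almost all of `R` once `r` is
small, and a cube of side `≤ r / 2` in which `E₋` has density `≥ s` contains none of them. From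
these points take a `t`-proportion (`t < θ`) in each cell of a grid of mesh `≪ r`. A cube `W` of
side `> r / 2` then meets `A` in at most `t |R ∩ W| ≤ t (1 - s) |W|`, plus the part in the cells
crossing `∂W`, which is negligible.
-/

open MeasureTheory Set

open Metric Filter Topology
open scoped ENNReal

lemma ENNReal.self_sub_ofReal_mul {a : ℝ≥0∞} (ha : a ≠ ∞) {t : ℝ} (ht : 0 ≤ t) :
    a - ENNReal.ofReal t * a = ENNReal.ofReal (1 - t) * a := by
  rw [ENNReal.ofReal_sub 1 ht, ENNReal.ofReal_one, ENNReal.sub_mul fun _ _ => ha, one_mul]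

lemma measure_inter_le_ofReal_sub_mul {α : Type*} [MeasurableSpace α] {μ : Measure α}
    {F E W : Set α} (hE : MeasurableSet E) (hFE : Disjoint F E) (hW : μ W ≠ ∞) {s : ℝ}
    (hs : 0 ≤ s) (hEW : ENNReal.ofReal s * μ W ≤ μ (E ∩ W)) :
    μ (F ∩ W) ≤ ENNReal.ofReal (1 - s) * μ W := by
  have hsum : μ (F ∩ W) + μ (E ∩ W) ≤ μ W := by
    calc μ (F ∩ W) + μ (E ∩ W) ≤ μ (W \ E) + μ (W ∩ E) := by
          rw [inter_comm E]
          gcongr 1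
          exact measure_mono fun x hx => ⟨hx.2, hFE.notMem_of_mem_left hx.1⟩
      _ = μ W := by rw [add_comm, measure_inter_add_sdiff W hE]
  calc μ (F ∩ W) ≤ μ W - μ (E ∩ W) :=
        ENNReal.le_sub_of_add_le_right
          (ne_top_of_le_ne_top hW (measure_mono inter_subset_right)) hsum
    _ ≤ μ W - ENNReal.ofReal s * μ W := tsub_le_tsub_left hEW _
    _ = ENNReal.ofReal (1 - s) * μ W := ENNReal.self_sub_ofReal_mul hW hs

variable {d : ℕ}

def cube (a : Fin d → ℝ) (l : ℝ) : Set (Fin d → ℝ) :=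
  univ.pi fun j => Icc (a j) (a j + l)

lemma measurableSet_cube (a : Fin d → ℝ) (l : ℝ) : MeasurableSet (cube a l) :=
  .univ_pi fun _ => measurableSet_Icc

lemma volume_cube (a : Fin d → ℝ) {l : ℝ} (hl : 0 ≤ l) :
    volume (cube a l) = ENNReal.ofReal (l ^ d) := by
  rw [cube, volume_pi_pi]
  simp [Real.volume_Icc, ENNReal.ofReal_pow hl]

lemma cube_subset_closedBall {a x : Fin d → ℝ} {l : ℝ} (hl : 0 ≤ l) (hx : x ∈ cube a l) :
    cube a l ⊆ closedBall x l := by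
  intro y hy
  refine (dist_pi_le_iff hl).2 fun j => ?_
  have hxj := hx j (mem_univ j)
  have hyj := hy j (mem_univ j)
  rw [Real.dist_eq, abs_le]
  constructor <;> linarith [hxj.1, hxj.2, hyj.1, hyj.2]

lemma IsJSPair.le_half (hd : 1 ≤ d) {τ s : ℝ} (h : IsJSPair d τ s) : s ≤ 1 / 2 := by
  obtain ⟨-, hs, hJS⟩ := h
  set E : Set (Fin d → ℝ) := cube 0 1
  set F : Set (Fin d → ℝ) := cube 0 2 \ E
  have hEQ : E ⊆ cube 0 2 := pi_mono fun _ _ => Icc_subset_Icc_right (by norm_num)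
  have hFm : MeasurableSet F := (measurableSet_cube _ _).diff (measurableSet_cube _ _)
  have hE : volume E = 1 := by simp [E, volume_cube]
  have hF : 0 < volume F := by
    rw [measure_sdiff hEQ (measurableSet_cube _ _).nullMeasurableSet (by simp [hE]), hE,
      volume_cube _ zero_le_two, tsub_pos_iff_lt, ← ENNReal.ofReal_one,
      ENNReal.ofReal_lt_ofReal_iff (by positivity)]
    exact one_lt_pow₀ one_lt_two (by omega)
  obtain ⟨W, ⟨b, l, hl, hWb⟩, -, hW⟩ := hJS (cube 0 2) ⟨0, 2, two_pos, rfl⟩ E F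
    (measurableSet_cube _ _) hFm hEQ sdiff_subset disjoint_sdiff_right
    (by simpa [F, hE] using hF)
  rw [ge_iff_le, le_min_iff] at hW
  have hWvol : volume W = ENNReal.ofReal (l ^ d) := by
    rw [show W = cube b l from hWb, volume_cube b hl.le]
  have hsW := hW.1.trans (measure_inter_le_ofReal_sub_mul hFm disjoint_sdiff_right
    (by simp [hWvol]) hs.le hW.2)
  rw [ENNReal.mul_le_mul_iff_left (by simp [hWvol]; positivity) (by simp [hWvol]),
    ENNReal.ofReal_le_ofReal_iff'] at hsW
  rcases hsW with hsW | hsW <;> linarith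

lemma volume_inter_coord_le_le_add {X : Set (Fin d → ℝ)} {c : Fin d → ℝ} {δ : ℝ} (hδ : 0 ≤ δ)
    (hX : X ⊆ cube c δ) (i : Fin d) {u v : ℝ} (huv : u ≤ v) :
    volume (X ∩ {x | x i ≤ v}) ≤
      volume (X ∩ {x | x i ≤ u}) + ENNReal.ofReal ((v - u) * δ ^ (d - 1)) := by
  classical
  set slab : Set (Fin d → ℝ) :=
    univ.pi (Function.update (fun j => Icc (c j) (c j + δ)) i (Icc u v))
  have hslab : volume slab = ENNReal.ofReal ((v - u) * δ ^ (d - 1)) := by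
    rw [volume_pi_pi, ← Finset.mul_prod_erase _ _ (Finset.mem_univ i),
      Finset.prod_congr rfl fun j hj => by rw [Function.update_of_ne (Finset.ne_of_mem_erase hj)]]
    simp [Real.volume_Icc, Finset.card_erase_of_mem, ENNReal.ofReal_mul (sub_nonneg.2 huv),
      ENNReal.ofReal_pow hδ]
  calc volume (X ∩ {x | x i ≤ v}) ≤ volume ((X ∩ {x | x i ≤ u}) ∪ slab) := by
        refine measure_mono fun x hx => ?_
        by_cases hxu : x i ≤ u
        · exact Or.inl ⟨hx.1, hxu⟩
        · refine Or.inr fun j _ => ?_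
          rcases eq_or_ne j i with rfl | hj
          · simpa using ⟨(not_le.1 hxu).le, hx.2⟩
          · simpa [hj] using hX hx.1 j (mem_univ j)
    _ ≤ _ := hslab ▸ measure_union_le _ _

lemma continuous_toReal_volume_inter_coord_le {X : Set (Fin d → ℝ)} {c : Fin d → ℝ} {δ : ℝ}
    (hδ : 0 ≤ δ) (hX : X ⊆ cube c δ) (i : Fin d) :
    Continuous fun u => (volume (X ∩ {x | x i ≤ u})).toReal := by
  have hfin : ∀ u, volume (X ∩ {x | x i ≤ u}) ≠ ∞ := fun u =>
    measure_ne_top_of_subset (inter_subset_left.trans hX) (by simp [volume_cube c hδ])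
  refine (LipschitzWith.of_le_add_mul' (δ ^ (d - 1)) fun u v => ?_).continuous
  rcases le_total u v with huv | hvu
  · have : volume (X ∩ {x | x i ≤ u}) ≤ volume (X ∩ {x | x i ≤ v}) :=
      measure_mono (inter_subset_inter_right _ fun x hx => le_trans hx huv)
    nlinarith [ENNReal.toReal_mono (hfin v) this, dist_nonneg (x := u) (y := v),
      pow_nonneg hδ (d - 1)]
  · have h := ENNReal.toReal_mono (by simp [hfin v]) (volume_inter_coord_le_le_add hδ hX i hvu)
    rw [ENNReal.toReal_add (hfin v) ENNReal.ofReal_ne_top,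
      ENNReal.toReal_ofReal (by nlinarith [pow_nonneg hδ (d - 1)])] at h
    rw [Real.dist_eq, abs_of_nonneg (sub_nonneg.2 hvu)]
    linarith

lemma exists_subset_volume_eq_mul {X : Set (Fin d → ℝ)} (hX : MeasurableSet X)
    {c : Fin d → ℝ} {δ : ℝ} (hδ : 0 ≤ δ) (hXc : X ⊆ cube c δ) (i : Fin d) {t : ℝ}
    (ht0 : 0 ≤ t) (ht1 : t ≤ 1) :
    ∃ A ⊆ X, MeasurableSet A ∧ volume A = ENNReal.ofReal t * volume X := by
  have hXfin : volume X ≠ ∞ := measure_ne_top_of_subset hXc (by simp [volume_cube c hδ])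
  set f : ℝ → ℝ := fun u => (volume (X ∩ {x | x i ≤ u})).toReal
  have hlo : f (c i) = 0 := by
    have hnull : volume {x : Fin d → ℝ | x i = c i} = 0 := by
      rw [volume_pi]
      exact Measure.pi_hyperplane (fun _ : Fin d => (volume : Measure ℝ)) i (c i)
    have hzero : volume (X ∩ {x | x i ≤ c i}) = 0 :=
      measure_mono_null (fun x hx => le_antisymm hx.2 (hXc hx.1 i (mem_univ i)).1) hnull
    simp only [f, hzero, ENNReal.toReal_zero]
  have hhi : f (c i + δ) = (volume X).toReal := by
    have hall : X ∩ {x | x i ≤ c i + δ} = X :=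
      inter_eq_left.2 fun x hx => (hXc hx i (mem_univ i)).2
    simp only [f, hall]
  obtain ⟨u, -, hu⟩ := intermediate_value_Icc (by linarith)
    (continuous_toReal_volume_inter_coord_le hδ hXc i).continuousOn
    (show t * (volume X).toReal ∈ Icc (f (c i)) (f (c i + δ)) by
      rw [hlo, hhi]
      exact ⟨by positivity, mul_le_of_le_one_left ENNReal.toReal_nonneg ht1⟩)
  refine ⟨X ∩ {x | x i ≤ u}, inter_subset_left,
    hX.inter (measurableSet_le (measurable_pi_apply i) measurable_const), ?_⟩
  rw [← ENNReal.ofReal_toReal (measure_ne_top_of_subset inter_subset_left hXfin),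
    ← ENNReal.ofReal_toReal hXfin, ← ENNReal.ofReal_mul ht0]
  exact congrArg ENNReal.ofReal hu

def gridCell (δ : ℝ) (j : Fin d → ℤ) : Set (Fin d → ℝ) :=
  univ.pi fun i => Ico (δ * j i) (δ * j i + δ)

lemma measurableSet_gridCell (δ : ℝ) (j : Fin d → ℤ) : MeasurableSet (gridCell δ j) :=
  .univ_pi fun _ => measurableSet_Ico

lemma mem_gridCell_iff {δ : ℝ} (hδ : 0 < δ) {x : Fin d → ℝ} {j : Fin d → ℤ} :
    x ∈ gridCell δ j ↔ (fun i => ⌊x i / δ⌋) = j := by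
  simp only [gridCell, mem_univ_pi, mem_Ico, funext_iff, Int.floor_eq_iff, le_div_iff₀ hδ,
    div_lt_iff₀ hδ, add_mul, one_mul, mul_comm δ]

lemma pairwise_disjoint_gridCell {δ : ℝ} (hδ : 0 < δ) :
    Pairwise (Function.onFun Disjoint (gridCell δ : (Fin d → ℤ) → Set (Fin d → ℝ))) :=
  fun _ _ hjj' => disjoint_left.2 fun _ hx hx' =>
    hjj' (((mem_gridCell_iff hδ).1 hx).symm.trans ((mem_gridCell_iff hδ).1 hx'))

lemma iUnion_gridCell {δ : ℝ} (hδ : 0 < δ) : ⋃ j, gridCell (d := d) δ j = univ :=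
  eq_univ_of_forall fun _ => mem_iUnion.2 ⟨_, (mem_gridCell_iff hδ).2 rfl⟩

lemma gridCell_subset_cube (δ : ℝ) (j : Fin d → ℤ) :
    gridCell δ j ⊆ cube (fun i => δ * j i) δ :=
  pi_mono fun _ _ => Ico_subset_Icc_self

lemma gridCell_subset_cube_of_mem {δ ℓ : ℝ} {j : Fin d → ℤ} {b x : Fin d → ℝ}
    (hxj : x ∈ gridCell δ j) (hxb : x ∈ cube (fun i => b i + δ) (ℓ - 2 * δ)) :
    gridCell δ j ⊆ cube b ℓ := by
  intro y hy i _
  have hx := hxj i (mem_univ i)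
  have hy := hy i (mem_univ i)
  have hxb := hxb i (mem_univ i)
  simp only [mem_Ico, mem_Icc] at hx hy hxb ⊢
  constructor <;> linarith

lemma exists_subset_volume_inter_cube_le [NeZero d] {G : Set (Fin d → ℝ)} (hG : MeasurableSet G)
    {t δ : ℝ} (ht0 : 0 ≤ t) (ht1 : t ≤ 1) (hδ : 0 < δ) :
    ∃ A ⊆ G, MeasurableSet A ∧ volume A = ENNReal.ofReal t * volume G ∧
      ∀ b ℓ, volume (A ∩ cube b ℓ) ≤ ENNReal.ofReal t * volume (G ∩ cube b ℓ) +
        volume (cube b ℓ \ cube (fun i => b i + δ) (ℓ - 2 * δ)) := by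
  choose A hAG hAm hAvol using fun j => exists_subset_volume_eq_mul
    (hG.inter (measurableSet_gridCell δ j)) hδ.le
    (inter_subset_right.trans (gridCell_subset_cube δ j)) 0 ht0 ht1
  have hGdisj : Pairwise (Function.onFun Disjoint fun j => G ∩ gridCell δ j) :=
    fun _ _ h => (pairwise_disjoint_gridCell hδ h).mono inter_subset_right inter_subset_right
  have hAdisj : Pairwise (Function.onFun Disjoint A) :=
    fun _ _ h => (hGdisj h).mono (hAG _) (hAG _)
  refine ⟨⋃ j, A j, iUnion_subset fun j => (hAG j).trans inter_subset_left, .iUnion hAm, ?_,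
    fun b ℓ => ?_⟩
  · rw [measure_iUnion hAdisj hAm, tsum_congr hAvol, ENNReal.tsum_mul_left,
      ← measure_iUnion hGdisj fun j => hG.inter (measurableSet_gridCell δ j), ← inter_iUnion,
      iUnion_gridCell hδ, inter_univ]
  set S := {j | gridCell δ j ⊆ cube b ℓ}
  have hcover : (⋃ j, A j) ∩ cube b ℓ ⊆
      (⋃ j ∈ S, A j) ∪ (cube b ℓ \ cube (fun i => b i + δ) (ℓ - 2 * δ)) := by
    rintro x ⟨hxA, hxW⟩
    obtain ⟨j, hxj⟩ := mem_iUnion.1 hxA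
    by_cases hj : j ∈ S
    · exact Or.inl (mem_biUnion hj hxj)
    · exact Or.inr ⟨hxW, fun hx => hj (gridCell_subset_cube_of_mem (hAG j hxj).2 hx)⟩
  calc volume ((⋃ j, A j) ∩ cube b ℓ)
      ≤ volume (⋃ j ∈ S, A j) + volume (cube b ℓ \ cube (fun i => b i + δ) (ℓ - 2 * δ)) :=
        (measure_mono hcover).trans (measure_union_le _ _)
    _ = ENNReal.ofReal t * volume (⋃ j ∈ S, G ∩ gridCell δ j) +
          volume (cube b ℓ \ cube (fun i => b i + δ) (ℓ - 2 * δ)) := by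
        rw [measure_biUnion S.to_countable (hAdisj.set_pairwise S) fun j _ => hAm j,
          measure_biUnion S.to_countable (hGdisj.set_pairwise S)
            fun j _ => hG.inter (measurableSet_gridCell δ j),
          ← ENNReal.tsum_mul_left]
        simp only [hAvol]
    _ ≤ _ := by
        gcongr
        exact iUnion₂_subset fun j hj => inter_subset_inter_right G hj

lemma measurable_measure_inter_closedBall {X : Type*} [PseudoMetricSpace X] [MeasurableSpace X]
    [OpensMeasurableSpace X] [SecondCountableTopology X] (μ : Measure X) [SFinite μ]
    {E : Set X} (hE : MeasurableSet E) (r : ℝ) :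
    Measurable fun x => μ (E ∩ closedBall x r) :=
  measurable_measure_prodMk_left (s := {p : X × X | p.2 ∈ E ∧ dist p.2 p.1 ≤ r})
    ((measurable_snd hE).inter
      (measurableSet_le (measurable_snd.dist measurable_fst) measurable_const))

-- Rational radii keep this set measurable.
def sparsePoints (E : Set (Fin d → ℝ)) (c r : ℝ) : Set (Fin d → ℝ) :=
  {x | ∀ q : ℚ, 0 < (q : ℝ) → (q : ℝ) ≤ r →
    volume (E ∩ closedBall x q) ≤ ENNReal.ofReal c * volume (closedBall x q)}

lemma measurableSet_sparsePoints {E : Set (Fin d → ℝ)} (hE : MeasurableSet E) (c r : ℝ) :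
    MeasurableSet (sparsePoints E c r) := by
  simp only [sparsePoints, ofPred_forall]
  exact .iInter fun q => .iInter fun _ => .iInter fun _ =>
    measurableSet_le (measurable_measure_inter_closedBall volume hE q)
      (by simpa using (measurable_measure_inter_closedBall volume .univ q).const_mul _)

lemma sparsePoints_anti (E : Set (Fin d → ℝ)) (c : ℝ) {r r' : ℝ} (hr : r ≤ r') :
    sparsePoints E c r' ⊆ sparsePoints E c r :=
  fun _ hx q hq hqr => hx q hq (hqr.trans hr)

lemma ae_exists_mem_sparsePoints {E : Set (Fin d → ℝ)} (hE : MeasurableSet E) {c : ℝ}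
    (hc : 0 < c) : ∀ᵐ x, x ∉ E → ∃ r > 0, x ∈ sparsePoints E c r := by
  filter_upwards [Besicovitch.ae_tendsto_measure_inter_div_of_measurableSet volume hE]
    with x hx hxE
  rw [indicator_of_notMem hxE] at hx
  obtain ⟨r, hr, hsmall⟩ :=
    mem_nhdsGT_iff_exists_Ioc_subset.1 (hx.eventually_lt_const (ENNReal.ofReal_pos.2 hc))
  refine ⟨r, hr, fun q hq hqr => ?_⟩
  have h : volume (E ∩ closedBall x q) / volume (closedBall x q) < ENNReal.ofReal c :=
    hsmall ⟨hq, hqr⟩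
  rw [ENNReal.div_lt_iff (.inl (measure_closedBall_pos volume x hq).ne')
    (.inl measure_closedBall_lt_top.ne)] at h
  exact h.le

lemma volume_inter_cube_le_of_mem_sparsePoints {E : Set (Fin d → ℝ)} {c r ℓ : ℝ} (hc : 0 ≤ c)
    {x b : Fin d → ℝ} (hx : x ∈ sparsePoints E c r) (hxb : x ∈ cube b ℓ) (hℓ : 0 < ℓ)
    (hℓr : 2 * ℓ ≤ r) :
    volume (E ∩ cube b ℓ) ≤ ENNReal.ofReal (4 ^ d * c) * volume (cube b ℓ) := by
  obtain ⟨q, hℓq, hq2ℓ⟩ := exists_rat_btwn (by linarith : ℓ < 2 * ℓ)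
  have hq : (0 : ℝ) < q := hℓ.trans hℓq
  calc volume (E ∩ cube b ℓ) ≤ volume (E ∩ closedBall x q) :=
        measure_mono (inter_subset_inter_right E ((cube_subset_closedBall hℓ.le hxb).trans
          (closedBall_subset_closedBall hℓq.le)))
    _ ≤ ENNReal.ofReal c * ENNReal.ofReal ((2 * q) ^ d) := by
        have hball := Real.volume_pi_closedBall x hq.le
        rw [Fintype.card_fin] at hball
        rw [← hball]
        exact hx q hq (hq2ℓ.le.trans hℓr)
    _ ≤ ENNReal.ofReal c * ENNReal.ofReal ((4 * ℓ) ^ d) := by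
        gcongr ENNReal.ofReal c * ENNReal.ofReal (?_ ^ d)
        linarith
    _ = _ := by
        rw [volume_cube b hℓ.le, ← ENNReal.ofReal_mul hc, ← ENNReal.ofReal_mul (by positivity)]
        ring_nf

lemma exists_volume_sdiff_sparsePoints_lt {R E : Set (Fin d → ℝ)} (hR : MeasurableSet R)
    (hE : MeasurableSet E) (hRE : Disjoint R E) (hRfin : volume R ≠ ∞) {c : ℝ} (hc : 0 < c)
    {ε : ℝ≥0∞} (hε : 0 < ε) : ∃ r > 0, volume (R \ sparsePoints E c r) < ε := by
  set S : ℕ → Set (Fin d → ℝ) := fun n => R \ sparsePoints E c (1 / (n + 1))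
  have hS : Antitone S := fun m n hmn => sdiff_subset_sdiff_right (sparsePoints_anti E c
    (one_div_le_one_div_of_le (by positivity) (by exact_mod_cast Nat.succ_le_succ hmn)))
  have hlim : Tendsto (fun n => volume (S n)) atTop (𝓝 (volume (⋂ n, S n))) :=
    tendsto_measure_iInter_atTop
      (fun n => (hR.diff (measurableSet_sparsePoints hE c _)).nullMeasurableSet) hS
      ⟨0, measure_ne_top_of_subset sdiff_subset hRfin⟩
  have hnull : volume (⋂ n, S n) = 0 := by
    refine measure_mono_null (fun x hx => ?_) (ae_iff.1 (ae_exists_mem_sparsePoints hE hc))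
    intro hsparse
    obtain ⟨r, hr, hxr⟩ := hsparse (hRE.notMem_of_mem_left (mem_iInter.1 hx 0).1)
    obtain ⟨n, hn⟩ := exists_nat_one_div_lt hr
    exact (mem_iInter.1 hx n).2 (sparsePoints_anti E c hn.le hxr)
  obtain ⟨n, hn⟩ := ((hnull ▸ hlim).eventually (gt_mem_nhds hε)).exists
  exact ⟨1 / (n + 1), Nat.one_div_pos_of_nat, hn⟩

lemma volume_cube_sdiff_shrink_le (b : Fin d → ℝ) {ℓ δ γ : ℝ} (hℓ : 0 < ℓ) (hγ : γ ≤ 1 / 2)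
    (hδ : 0 ≤ δ) (hδℓ : δ ≤ γ * ℓ) :
    volume (cube b ℓ \ cube (fun i => b i + δ) (ℓ - 2 * δ)) ≤
      ENNReal.ofReal (2 * d * γ * ℓ ^ d) := by
  have h2δ : 2 * δ ≤ ℓ := by nlinarith
  have hsub : cube (fun i => b i + δ) (ℓ - 2 * δ) ⊆ cube b ℓ :=
    pi_mono fun i _ => Icc_subset_Icc (by linarith) (by linarith)
  rw [measure_sdiff hsub (measurableSet_cube _ _).nullMeasurableSet
      (by simp [volume_cube _ (sub_nonneg.2 h2δ)]),
    volume_cube _ hℓ.le, volume_cube _ (sub_nonneg.2 h2δ), ← ENNReal.ofReal_sub _ (by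
      have := sub_nonneg.2 h2δ; positivity)]
  refine ENNReal.ofReal_le_ofReal ?_
  have hbern : 1 - 2 * d * γ ≤ (1 - 2 * γ) ^ d := by
    have := one_add_mul_le_pow (a := -2 * γ) (by linarith) d
    ring_nf at this ⊢
    linarith
  have hpow : ((1 - 2 * γ) * ℓ) ^ d ≤ (ℓ - 2 * δ) ^ d :=
    pow_le_pow_left₀ (by nlinarith) (by linarith) d
  rw [mul_pow] at hpow
  nlinarith [mul_le_mul_of_nonneg_right hbern (pow_pos hℓ d).le]

lemma disjoint_sparsePoints_cube {E : Set (Fin d → ℝ)} {s r ℓ : ℝ} (hs : 0 < s) (hℓ : 0 < ℓ)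
    (hℓr : 2 * ℓ ≤ r) {b : Fin d → ℝ}
    (hdense : ENNReal.ofReal s * volume (cube b ℓ) ≤ volume (E ∩ cube b ℓ)) :
    Disjoint (sparsePoints E (s / (2 * 4 ^ d)) r) (cube b ℓ) := by
  refine disjoint_left.2 fun x hx hxb => ?_
  have hsparse := volume_inter_cube_le_of_mem_sparsePoints (by positivity) hx hxb hℓ hℓr
  rw [show (4 : ℝ) ^ d * (s / (2 * 4 ^ d)) = s / 2 by field_simp] at hsparse
  have hW : volume (cube b ℓ) = ENNReal.ofReal (ℓ ^ d) := volume_cube b hℓ.le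
  have hlt : ENNReal.ofReal (s / 2) * volume (cube b ℓ) < ENNReal.ofReal s * volume (cube b ℓ) :=
    (ENNReal.mul_lt_mul_iff_left (by simp [hW]; positivity) (by simp [hW])).2
      ((ENNReal.ofReal_lt_ofReal_iff hs).2 (by linarith))
  exact (hlt.trans_le (hdense.trans hsparse)).false

lemma ENNReal.exists_mem_Ioo_ofReal_sub_mul_lt {a c : ℝ≥0∞} (ha : a ≠ ∞) {θ : ℝ} (hθ : 0 < θ)
    (h : ENNReal.ofReal (1 - θ) * a < c) : ∃ t ∈ Ioo 0 θ, ENNReal.ofReal (1 - t) * a < c := by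
  have hcont : Tendsto (fun t => ENNReal.ofReal (1 - t) * a) (𝓝[<] θ)
      (𝓝 (ENNReal.ofReal (1 - θ) * a)) :=
    ENNReal.Tendsto.mul_const ((ENNReal.continuous_ofReal.comp
      (continuous_const.sub continuous_id)).tendsto θ |>.mono_left nhdsWithin_le_nhds) (.inr ha)
  exact ((eventually_mem_set.2 (Ioo_mem_nhdsLT hθ)).and (hcont.eventually (gt_mem_nhds h))).exists

lemma measure_sdiff_lt_of_measure_eq_mul {α : Type*} [MeasurableSpace α] {μ : Measure α}
    {R G A : Set α} (hGR : G ⊆ R) (hAG : A ⊆ G) (hA : MeasurableSet A) (hGfin : μ G ≠ ∞)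
    {t : ℝ} (ht : 0 ≤ t) (hAvol : μ A = ENNReal.ofReal t * μ G) {c : ℝ≥0∞}
    (hRG : μ (R \ G) < c - ENNReal.ofReal (1 - t) * μ R) : μ (R \ A) < c := by
  have hGA : μ (G \ A) ≤ ENNReal.ofReal (1 - t) * μ R := by
    rw [measure_sdiff hAG hA.nullMeasurableSet (measure_ne_top_of_subset hAG hGfin), hAvol,
      ENNReal.self_sub_ofReal_mul hGfin ht]
    gcongr
  calc μ (R \ A) ≤ μ (R \ G) + μ (G \ A) :=
        (measure_mono (sdiff_triangle R G A)).trans (measure_union_le _ _)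
    _ < (c - ENNReal.ofReal (1 - t) * μ R) + ENNReal.ofReal (1 - t) * μ R :=
        ENNReal.add_lt_add_of_lt_of_le (measure_ne_top_of_subset sdiff_subset hGfin) hRG hGA
    _ = c := tsub_add_cancel_of_le (tsub_pos_iff_lt.1 (zero_le.trans_lt hRG)).le

theorem exists_subset_sparse_in_dense_cubes [NeZero d] {R E : Set (Fin d → ℝ)}
    (hR : MeasurableSet R) (hE : MeasurableSet E) (hRE : Disjoint R E) (hRfin : volume R ≠ ∞)
    {θ s : ℝ} (hθ0 : 0 < θ) (hθ1 : θ ≤ 1) (hs0 : 0 < s) (hs1 : s < 1) {c : ℝ≥0∞}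
    (hc : ENNReal.ofReal (1 - θ) * volume R < c) :
    ∃ A ⊆ R, MeasurableSet A ∧ volume (R \ A) < c ∧
      ∀ b ℓ, 0 < ℓ → ENNReal.ofReal s * volume (cube b ℓ) ≤ volume (E ∩ cube b ℓ) →
        volume (A ∩ cube b ℓ) ≤ ENNReal.ofReal (θ * (1 - s)) * volume (cube b ℓ) := by
  obtain ⟨t, ⟨ht0, htθ⟩, htc⟩ := ENNReal.exists_mem_Ioo_ofReal_sub_mul_lt hRfin hθ0 hc
  set κ : ℝ := s / (2 * 4 ^ d)
  obtain ⟨r, hr, hRr⟩ := exists_volume_sdiff_sparsePoints_lt hR hE hRE hRfin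
    (by positivity : 0 < κ) (tsub_pos_of_lt htc)
  set G := R ∩ sparsePoints E κ r
  have hd : (0 : ℝ) < d := by exact_mod_cast NeZero.pos d
  have h1s : 0 < 1 - s := sub_pos.2 hs1
  -- The grid cells of mesh `γ r / 2` crossing the boundary of a cube of side `ℓ > r / 2` lie in
  -- a shell of volume `≤ 2 d γ ℓ^d ≤ (θ - t) (1 - s) ℓ^d`.
  set γ : ℝ := min (1 / 2) ((θ - t) * (1 - s) / (2 * d))
  have hγ : 0 < γ := lt_min (by norm_num) (by have := sub_pos.2 htθ; positivity)
  have hγθ : 2 * d * γ ≤ (θ - t) * (1 - s) := by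
    have := min_le_right (1 / 2 : ℝ) ((θ - t) * (1 - s) / (2 * d))
    rw [le_div_iff₀ (by positivity)] at this
    linarith
  obtain ⟨A, hAG, hA, hAvol, hAW⟩ := exists_subset_volume_inter_cube_le
    (hR.inter (measurableSet_sparsePoints hE κ r)) ht0.le (htθ.le.trans hθ1)
    (by positivity : 0 < γ * r / 2)
  refine ⟨A, hAG.trans inter_subset_left, hA, measure_sdiff_lt_of_measure_eq_mul inter_subset_left
    hAG hA (measure_ne_top_of_subset inter_subset_left hRfin) ht0.le hAvol
    (by rwa [sdiff_self_inter]), fun b ℓ hℓ hdense => ?_⟩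
  rcases le_or_gt (2 * ℓ) r with hsmall | hlarge
  · have hAW : Disjoint A (cube b ℓ) :=
      (disjoint_sparsePoints_cube hs0 hℓ hsmall hdense).mono_left (hAG.trans inter_subset_right)
    simp [hAW.inter_eq]
  have hW : volume (cube b ℓ) = ENNReal.ofReal (ℓ ^ d) := volume_cube b hℓ.le
  have hGW : volume (G ∩ cube b ℓ) ≤ ENNReal.ofReal (1 - s) * volume (cube b ℓ) :=
    measure_inter_le_ofReal_sub_mul hE (hRE.mono_left inter_subset_left) (by simp [hW]) hs0.le
      hdense
  have hshell := volume_cube_sdiff_shrink_le b hℓ (min_le_left _ _) (by positivity)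
    (show γ * r / 2 ≤ γ * ℓ by nlinarith)
  calc volume (A ∩ cube b ℓ)
      ≤ ENNReal.ofReal t * (ENNReal.ofReal (1 - s) * volume (cube b ℓ)) +
          ENNReal.ofReal (2 * d * γ * ℓ ^ d) := (hAW b ℓ).trans (by gcongr)
    _ ≤ _ := by
        rw [hW, ← ENNReal.ofReal_mul h1s.le, ← ENNReal.ofReal_mul ht0.le,
          ← ENNReal.ofReal_add (by positivity) (by positivity),
          ← ENNReal.ofReal_mul (by nlinarith)]
        exact ENNReal.ofReal_le_ofReal (by nlinarith [pow_pos hℓ d])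

lemma ofReal_sub_mul_le_measure_inter {α : Type*} [MeasurableSpace α] {μ : Measure α}
    {P A W : Set α} {s η : ℝ} (hη : 0 ≤ η) (hηs : η ≤ s) (hW : μ W ≠ ∞)
    (hPA : ENNReal.ofReal s * μ W ≤ μ ((P ∪ A) ∩ W)) (hA : μ (A ∩ W) ≤ ENNReal.ofReal η * μ W) :
    ENNReal.ofReal (s - η) * μ W ≤ μ (P ∩ W) := by
  refine ENNReal.le_of_add_le_add_right (a := ENNReal.ofReal η * μ W)
    (ENNReal.mul_ne_top ENNReal.ofReal_ne_top hW) ?_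
  calc ENNReal.ofReal (s - η) * μ W + ENNReal.ofReal η * μ W = ENNReal.ofReal s * μ W := by
        rw [← add_mul, ← ENNReal.ofReal_add (by linarith) hη, sub_add_cancel]
    _ ≤ μ (P ∩ W) + μ (A ∩ W) := by
        rw [union_inter_distrib_right] at hPA
        exact hPA.trans (measure_union_le _ _)
    _ ≤ _ := by gcongr

lemma IsJSPair.exists_cube_union {τ s : ℝ} (h : IsJSPair d τ s) {Q Ep Em A : Set (Fin d → ℝ)}
    (hQ : IsCube Q) (hEp : MeasurableSet Ep) (hEm : MeasurableSet Em) (hA : MeasurableSet A)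
    (hEpQ : Ep ⊆ Q) (hEmQ : Em ⊆ Q) (hdisj : Disjoint Ep Em) (hAR : A ⊆ (Q \ Ep) \ Em)
    (hRA : ENNReal.ofReal τ * volume (((Q \ Ep) \ Em) \ A) < min (volume Ep) (volume Em)) :
    ∃ W, IsCube W ∧ W ⊆ Q ∧ ENNReal.ofReal s * volume W ≤ volume ((Ep ∪ A) ∩ W) ∧
      ENNReal.ofReal s * volume W ≤ volume (Em ∩ W) := by
  have hR : (Q \ (Ep ∪ A)) \ Em = ((Q \ Ep) \ Em) \ A := by
    rw [← sdiff_sdiff, sdiff_right_comm]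
  obtain ⟨W, hW, hWQ, hEW⟩ := h.2.2 Q hQ (Ep ∪ A) Em (hEp.union hA) hEm
    (union_subset hEpQ (hAR.trans (sdiff_subset.trans sdiff_subset))) hEmQ
    (disjoint_union_left.2 ⟨hdisj, disjoint_sdiff_left.mono_left hAR⟩)
    (by rw [hR]; exact hRA.trans_le (min_le_min (measure_mono subset_union_left) le_rfl))
  exact ⟨W, hW, hWQ, le_min_iff.1 hEW⟩

theorem stmt_5 (d : ℕ) (hd : 1 ≤ d) (τ s θ : ℝ)
    (h : IsJSPair d τ s) (hθ0 : 0 < θ) (hθ : θ < s / (1 - s)) :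
    IsJSPair d ((1 - θ) * τ) (s - θ * (1 - s)) := by
  have : NeZero d := ⟨by omega⟩
  have hs2 := h.le_half hd
  have hτ : 0 < τ := h.1
  have hs : 0 < s := h.2.1
  have h1s : 0 < 1 - s := by linarith
  have hθs : θ * (1 - s) < s := (lt_div_iff₀ h1s).1 hθ
  have hθ1 : θ < 1 := by nlinarith
  refine ⟨mul_pos (sub_pos.2 hθ1) hτ, sub_pos.2 hθs, ?_⟩
  rintro Q ⟨a, L, hL, hQ⟩ Ep Em hEp hEm hEpQ hEmQ hdisj hmin
  replace hQ : Q = cube a L := hQ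
  subst hQ
  obtain ⟨A, hAR, hA, hRA, hAW⟩ := exists_subset_sparse_in_dense_cubes
    (((measurableSet_cube a L).diff hEp).diff hEm) hEm disjoint_sdiff_left
    (measure_ne_top_of_subset (sdiff_subset.trans sdiff_subset) (by simp [volume_cube a hL.le]))
    hθ0 hθ1.le hs (by linarith) (c := min (volume Ep) (volume Em) / ENNReal.ofReal τ)
    (by rwa [ENNReal.lt_div_iff_mul_lt (by simp [hτ]) (by simp), mul_right_comm,
      ← ENNReal.ofReal_mul (by linarith)])
  obtain ⟨W, ⟨b, ℓ, hℓ, hW⟩, hWQ, hEpW, hEmW⟩ := h.exists_cube_union ⟨a, L, hL, rfl⟩ hEp hEm hA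
    hEpQ hEmQ hdisj hAR (by rw [mul_comm]; exact ENNReal.mul_lt_of_lt_div hRA)
  replace hW : W = cube b ℓ := hW
  subst hW
  refine ⟨cube b ℓ, ⟨b, ℓ, hℓ, rfl⟩, hWQ, le_min ?_ ?_⟩
  · exact ofReal_sub_mul_le_measure_inter (by positivity) hθs.le
      (by simp [volume_cube b hℓ.le]) hEpW (hAW b ℓ hℓ hEmW)
  · exact le_trans (by gcongr; exact sub_le_self _ (by positivity)) hEmW
end

section
/- Let $d \ge 1$ and $\tau > 0$. Then $\sigma(\tau, d) \le \frac{1}{2 + 1/\tau} = \frac{\tau}{2\tau + 1}$, where $\sigma(\tau, d) = \sup\{ s > 0 : (\tau, s) \in JS(d) \}$. -/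
open MeasureTheory Set

/-- `σ(τ, d)`: the supremum of all `s` for which `(τ, s)` is a John–Strömberg pair. -/
noncomputable def sigmaJS (τ : ℝ) (d : ℕ) : ℝ := sSup {s : ℝ | IsJSPair d τ s}

set_option maxHeartbeats 1000000 in
theorem stmt_8 (d : ℕ) (hd : 1 ≤ d) (τ : ℝ) (hτ : 0 < τ)
    (hne : {s : ℝ | IsJSPair d τ s}.Nonempty) :
    sigmaJS τ d ≤ 1 / (2 + 1 / τ) := by
  have hτ' : 0 < 1/τ := by positivity
  have hden : (0:ℝ) < 2 + 1/τ := by linarith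
  set B : ℝ := 1 / (2 + 1/τ) with hBdef
  have hB0 : 0 < B := by positivity
  have hBeq : B * (2 + 1/τ) = 1 := by rw [hBdef]; field_simp
  have hBhalf : B < 1/2 := by
    rw [hBdef, div_lt_div_iff₀ hden (by norm_num)]
    linarith
  refine Real.sSup_le ?_ hB0.le
  intro s hs
  by_contra hcon
  push_neg at hcon
  obtain ⟨hτpos, hspos, hJS⟩ := hs
  -- choose α with B < α < min s (1/2)
  set α : ℝ := (B + min s (1/2)) / 2 with hαdef
  have hmB : B < min s (1/2) := lt_min hcon hBhalf
  have hα1 : B < α := by rw [hαdef]; linarith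
  have hα2 : α < 1/2 := by
    have : α < min s (1/2) := by rw [hαdef]; linarith
    exact lt_of_lt_of_le this (min_le_right _ _)
  have hα3 : α < s := by
    have : α < min s (1/2) := by rw [hαdef]; linarith
    exact lt_of_lt_of_le this (min_le_left _ _)
  have hα0 : 0 < α := lt_trans hB0 hα1
  have hBeq2 : B * (2*τ+1) = τ := by rw [hBdef]; field_simp
  have hkey : τ * (1 - 2*α) < α := by
    nlinarith [mul_lt_mul_of_pos_right hα1 (show (0:ℝ) < 2*τ+1 by linarith)]
  -- index
  have hi : 0 < d := hd
  set i : Fin d := ⟨0, hi⟩ with hidef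
  -- sets
  set f : Fin d → Set ℝ := fun j => if j = i then Icc 0 α else Icc 0 1 with hfdef
  set g : Fin d → Set ℝ := fun j => if j = i then Icc (1-α) 1 else Icc 0 1 with hgdef
  set Q : Set (Fin d → ℝ) := Set.univ.pi fun _ => Icc (0:ℝ) 1 with hQdef
  set Ep : Set (Fin d → ℝ) := Set.univ.pi f with hEpdef
  set Em : Set (Fin d → ℝ) := Set.univ.pi g with hEmdef
  have hQcube : IsCube Q := ⟨fun _ => 0, 1, one_pos, by simp [hQdef]⟩
  have hEpm : MeasurableSet Ep :=
    MeasurableSet.univ_pi fun j => by by_cases h : j = i <;> simp [hfdef, h]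
  have hEmm : MeasurableSet Em :=
    MeasurableSet.univ_pi fun j => by by_cases h : j = i <;> simp [hgdef, h]
  have hEpQ : Ep ⊆ Q := by
    refine Set.pi_mono fun j _ => ?_
    by_cases h : j = i
    · simp only [hfdef, if_pos h]; exact Icc_subset_Icc le_rfl (by linarith)
    · simp [hfdef, h]
  have hEmQ : Em ⊆ Q := by
    refine Set.pi_mono fun j _ => ?_
    by_cases h : j = i
    · simp only [hgdef, if_pos h]; exact Icc_subset_Icc (by linarith) le_rfl
    · simp [hgdef, h]
  have hdisj : Disjoint Ep Em := by
    rw [Set.disjoint_left]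
    intro x hx1 hx2
    have h1 := hx1 i (mem_univ i)
    have h2 := hx2 i (mem_univ i)
    simp only [hfdef, if_pos rfl] at h1
    simp only [hgdef, if_pos rfl] at h2
    have := h1.2; have := h2.1
    linarith
  have hvolEp : volume Ep = ENNReal.ofReal α := by
    rw [hEpdef, volume_pi_pi]
    have hv : ∀ j, volume (f j) = if j = i then ENNReal.ofReal α else 1 := by
      intro j; by_cases h : j = i <;> simp [hfdef, h, Real.volume_Icc]
    simp only [hv]
    rw [Finset.prod_ite_eq' Finset.univ i (fun _ => ENNReal.ofReal α)]
    simp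
  have hvolEm : volume Em = ENNReal.ofReal α := by
    rw [hEmdef, volume_pi_pi]
    have hv : ∀ j, volume (g j) = if j = i then ENNReal.ofReal α else 1 := by
      intro j; by_cases h : j = i <;> simp [hgdef, h, Real.volume_Icc]
    simp only [hv]
    rw [Finset.prod_ite_eq' Finset.univ i (fun _ => ENNReal.ofReal α)]
    simp
  have hmemEp : ∀ x : Fin d → ℝ, (∀ k, x k ∈ Icc (0:ℝ) 1) → x i ∈ Icc (0:ℝ) α → x ∈ Ep := by
    intro x hxQ hxi
    rw [hEpdef, Set.mem_univ_pi]
    intro k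
    by_cases hk : k = i
    · simp only [hfdef, if_pos hk]; rw [hk]; exact hxi
    · simp only [hfdef, if_neg hk]; exact hxQ k
  have hmemEm : ∀ x : Fin d → ℝ, (∀ k, x k ∈ Icc (0:ℝ) 1) → x i ∈ Icc (1-α) (1:ℝ) → x ∈ Em := by
    intro x hxQ hxi
    rw [hEmdef, Set.mem_univ_pi]
    intro k
    by_cases hk : k = i
    · simp only [hgdef, if_pos hk]; rw [hk]; exact hxi
    · simp only [hgdef, if_neg hk]; exact hxQ k
  have hsub : (Q \ Ep) \ Em ⊆
      Set.univ.pi (fun j => if j = i then Icc α (1-α) else Icc (0:ℝ) 1) := by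
    intro x hx
    obtain ⟨⟨hxQ, hxEp⟩, hxEm⟩ := hx
    rw [hQdef, Set.mem_univ_pi] at hxQ
    intro j _
    by_cases h : j = i
    · show x j ∈ if j = i then Icc α (1-α) else Icc (0:ℝ) 1
      rw [if_pos h, h]
      have hji := hxQ i
      simp only [mem_Icc] at hji ⊢
      constructor
      · by_contra hc
        push_neg at hc
        exact hxEp (hmemEp x hxQ (by simp only [mem_Icc]; exact ⟨hji.1, hc.le⟩))
      · by_contra hc
        push_neg at hc
        exact hxEm (hmemEm x hxQ (by simp only [mem_Icc]; exact ⟨hc.le, hji.2⟩))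
    · show x j ∈ if j = i then Icc α (1-α) else Icc (0:ℝ) 1
      rw [if_neg h]; exact hxQ j
  have hvolS : volume (Set.univ.pi (fun j => if j = i then Icc α (1-α) else Icc (0:ℝ) 1))
      = ENNReal.ofReal (1 - 2*α) := by
    rw [volume_pi_pi]
    have hv : ∀ j, volume (if j = i then Icc α (1-α) else Icc (0:ℝ) 1)
        = if j = i then ENNReal.ofReal (1-2*α) else 1 := by
      intro j
      by_cases h : j = i
      · rw [if_pos h, if_pos h, Real.volume_Icc]; ring_nf
      · simp [h, Real.volume_Icc]
    simp only [hv]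
    rw [Finset.prod_ite_eq' Finset.univ i (fun _ => ENNReal.ofReal (1-2*α))]
    simp
  have hrest : volume ((Q \ Ep) \ Em) ≤ ENNReal.ofReal (1 - 2*α) :=
    hvolS ▸ measure_mono hsub
  have hhyp : min (volume Ep) (volume Em) > ENNReal.ofReal τ * volume ((Q \ Ep) \ Em) := by
    rw [hvolEp, hvolEm, min_self]
    calc ENNReal.ofReal τ * volume ((Q \ Ep) \ Em)
        ≤ ENNReal.ofReal τ * ENNReal.ofReal (1 - 2*α) := mul_le_mul_right hrest _
      _ = ENNReal.ofReal (τ * (1 - 2*α)) := (ENNReal.ofReal_mul hτ.le).symm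
      _ < ENNReal.ofReal α := (ENNReal.ofReal_lt_ofReal_iff hα0).mpr hkey
  obtain ⟨W, ⟨b, l, hl, hWeq⟩, hWQ, hminW⟩ :=
    hJS Q hQcube Ep Em hEpm hEmm hEpQ hEmQ hdisj hhyp
  -- corner points give bounds on b and l
  have hbW : b ∈ W := by
    rw [hWeq, Set.mem_univ_pi]; intro j; exact ⟨le_refl _, by linarith⟩
  have htW : (fun j => b j + l) ∈ W := by
    rw [hWeq, Set.mem_univ_pi]; intro j; exact ⟨by linarith, le_refl _⟩
  have hb0 : ∀ j, 0 ≤ b j := by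
    intro j
    have h := hWQ hbW
    rw [hQdef, Set.mem_univ_pi] at h
    exact (h j).1
  have hb1 : ∀ j, b j + l ≤ 1 := by
    intro j
    have h := hWQ htW
    rw [hQdef, Set.mem_univ_pi] at h
    exact (h j).2
  have hl1 : l ≤ 1 := by linarith [hb0 i, hb1 i]
  set P : ENNReal := ∏ j ∈ Finset.univ.erase i, ENNReal.ofReal l with hPdef
  have hP0 : P ≠ 0 := by
    rw [hPdef, Finset.prod_const]
    exact pow_ne_zero _ (by simp only [ne_eq, ENNReal.ofReal_eq_zero, not_le]; exact hl)
  have hPt : P ≠ ⊤ := by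
    rw [hPdef, Finset.prod_const]
    exact ENNReal.pow_ne_top ENNReal.ofReal_ne_top
  have hvolIcc : ∀ j : Fin d, volume (Icc (b j) (b j + l)) = ENNReal.ofReal l := by
    intro j; rw [Real.volume_Icc]; ring_nf
  have hvolW : volume W = ENNReal.ofReal l * P := by
    rw [hWeq, volume_pi_pi]
    simp only [hvolIcc]
    rw [← Finset.mul_prod_erase Finset.univ _ (Finset.mem_univ i), hPdef]
  set u : ℝ := min α (b i + l) - b i with hudef
  set v : ℝ := b i + l - max (1-α) (b i) with hvdef
  have hvolEpW : volume (Ep ∩ W) = ENNReal.ofReal u * P := by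
    rw [hEpdef, hWeq, ← Set.pi_inter_distrib, volume_pi_pi,
      ← Finset.mul_prod_erase Finset.univ _ (Finset.mem_univ i)]
    have h1 : f i ∩ Icc (b i) (b i + l) = Icc (b i) (min α (b i + l)) := by
      rw [hfdef]; simp only [if_pos rfl, if_true]
      rw [Set.Icc_inter_Icc, max_eq_right (hb0 i)]
    rw [h1, Real.volume_Icc, hPdef]
    congr 1
    apply Finset.prod_congr rfl
    intro j hj
    have hji : j ≠ i := (Finset.mem_erase.mp hj).1
    have h2 : f j ∩ Icc (b j) (b j + l) = Icc (b j) (b j + l) := by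
      rw [hfdef]; simp only [if_neg hji]
      exact Set.inter_eq_right.mpr (Icc_subset_Icc (hb0 j) (hb1 j))
    rw [h2, hvolIcc]
  have hvolEmW : volume (Em ∩ W) = ENNReal.ofReal v * P := by
    rw [hEmdef, hWeq, ← Set.pi_inter_distrib, volume_pi_pi,
      ← Finset.mul_prod_erase Finset.univ _ (Finset.mem_univ i)]
    have h1 : g i ∩ Icc (b i) (b i + l) = Icc (max (1-α) (b i)) (b i + l) := by
      rw [hgdef]; simp only [if_pos rfl, if_true]
      rw [Set.Icc_inter_Icc, min_eq_right (hb1 i)]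
    rw [h1, Real.volume_Icc, hPdef]
    congr 1
    apply Finset.prod_congr rfl
    intro j hj
    have hji : j ≠ i := (Finset.mem_erase.mp hj).1
    have h2 : g j ∩ Icc (b j) (b j + l) = Icc (b j) (b j + l) := by
      rw [hgdef]; simp only [if_neg hji]
      exact Set.inter_eq_right.mpr (Icc_subset_Icc (hb0 j) (hb1 j))
    rw [h2, hvolIcc]
  have hbase : ENNReal.ofReal s * volume W = ENNReal.ofReal (s*l) * P := by
    rw [hvolW, ENNReal.ofReal_mul hspos.le, mul_assoc]
  have key : ∀ w : ℝ, ENNReal.ofReal (s*l) * P ≤ ENNReal.ofReal w * P → s * l ≤ w := by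
    intro w hw
    have h2 := (ENNReal.mul_le_mul_iff_left hP0 hPt).mp hw
    have hwpos : 0 ≤ w := by
      by_contra hc
      push_neg at hc
      rw [ENNReal.ofReal_eq_zero.mpr hc.le] at h2
      have h3 : s * l ≤ 0 := ENNReal.ofReal_eq_zero.mp (le_antisymm h2 zero_le)
      nlinarith [mul_pos hspos hl]
    exact (ENNReal.ofReal_le_ofReal_iff hwpos).mp h2
  have hus : s * l ≤ u := key u (by
    rw [← hbase, ← hvolEpW]
    exact le_trans hminW (min_le_left _ _))
  have hvs : s * l ≤ v := key v (by
    rw [← hbase, ← hvolEmW]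
    exact le_trans hminW (min_le_right _ _))
  have humax : u ≤ α - b i := by
    rw [hudef]; have := min_le_left α (b i + l); linarith
  have hvmax : v ≤ b i + l - (1-α) := by
    rw [hvdef]; have := le_max_left (1-α) (b i); linarith
  nlinarith [mul_pos hl (sub_pos.mpr hα3),
    mul_nonneg (by linarith : (0:ℝ) ≤ 1 - l) (by linarith : (0:ℝ) ≤ 1 - 2*α), hb0 i]
end

section
/- (One-dimensional case with optimal constant) Whenever $E_+$ and $E_-$ are disjoint measurable subsets of $[0,1]$ satisfying $\min\{\lambda(E_+), \lambda(E_-)\} > \frac{1}{2} \lambda([0,1] \setminus E_+ \setminus E_-)$, there exists a closed subinterval $W \subseteq [0,1]$ of positive length with $\min\{\lambda(W \cap E_+), \lambda(W \cap E_-)\} \ge \frac{1}{4} \lambda(W)$. -/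
/-!
Suppose that no closed subinterval `W` satisfies the conclusion and, by symmetry, that
`|E₋| ≤ |E₊|`. Let `d t = |E₊ ∩ [0,t]| - |E₋ ∩ [0,t]|` and let `T` be the first time at which
`d` reaches `d 1 ≥ 0`. Let `K` consist of the point `1` and the times `t ∈ [0,T]` at which `d`
attains its maximum over `[0,t]` (rising sun lemma). On every gap `(u,v)` of `K` we have
`d u = d v`, so `E₊` and `E₋` have the same measure there, and since `W = [u,v]` fails the
conclusion each of them fills at most a quarter of the gap. At almost every point of `E₋` the
derivative of `d` is `-1`, which is incompatible with a record, so `E₋ ∩ K` is null. Hence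
`|E₊| + 3|E₋| = |E₊ ∩ K| + 4|E₊ \ K| ≤ |K| + |[0,1] \ K| = 1`, contradicting the hypothesis
`min(|E₊|, |E₋|) > (1 - |E₊| - |E₋|)/2`.
-/

open MeasureTheory Set Filter Topology

section RecordSet

variable {f : ℝ → ℝ} {a b : ℝ}

def recordSet (f : ℝ → ℝ) (a b : ℝ) : Set ℝ := {t ∈ Icc a b | IsMaxOn f (Icc a t) t}

theorem isClosed_recordSet (hf : Continuous f) : IsClosed (recordSet f a b) := by
  -- At `t = s` the condition `f s ≤ f t` holds trivially, so `Iio s` may be replaced by `Iic s`.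
  have : recordSet f a b = Icc a b ∩ ⋂ s ∈ Ici a, Iic s ∪ {t | f s ≤ f t} := by
    ext t
    simp only [recordSet, IsMaxOn, IsMaxFilter, eventually_principal, mem_Icc, mem_ofPred_eq,
      mem_inter_iff, mem_iInter, mem_Ici, mem_union, mem_Iic]
    refine and_congr_right fun _ => forall_congr' fun s => ⟨fun h hs => ?_, fun h hs => ?_⟩
    · rcases le_total t s with hts | hst
      · exact Or.inl hts
      · exact Or.inr (h ⟨hs, hst⟩)
    · rcases h hs.1 with hts | hst
      · rw [le_antisymm hs.2 hts]
      · exact hst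
  rw [this]
  exact isClosed_Icc.inter (isClosed_biInter fun s _ => isClosed_Iic.union
    (isClosed_le continuous_const hf))

theorem left_mem_recordSet (hab : a ≤ b) : a ∈ recordSet f a b :=
  ⟨left_mem_Icc.2 hab, fun s hs => show f s ≤ f a by rw [le_antisymm hs.2 hs.1]⟩

theorem exists_mem_Ioo_lt_isMaxOn (hf : Continuous f) (hab : a ≤ b) (h : f a < f b) :
    ∃ c ∈ Ioo a b, f a < f c ∧ IsMaxOn f (Icc a c) c := by
  obtain ⟨t, ht, hft⟩ := intermediate_value_Icc hab hf.continuousOn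
    (mem_Icc.2 ⟨(left_lt_add_div_two.2 h).le, (add_div_two_lt_right.2 h).le⟩)
  obtain ⟨c, hc, hmax⟩ := isCompact_Icc.exists_isMaxOn (nonempty_Icc.2 ht.1) hf.continuousOn
  have hfc : f a < f c := (left_lt_add_div_two.2 h).trans_le (hft ▸ hmax (right_mem_Icc.2 ht.1))
  refine ⟨c, ⟨hc.1.lt_of_ne ?_, hc.2.trans_lt (ht.2.lt_of_ne ?_)⟩, hfc, hmax.on_subset
    (Icc_subset_Icc_right hc.2)⟩
  · rintro rfl; exact hfc.false
  · rintro rfl; exact (add_div_two_lt_right.2 h).ne' hft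

theorem apply_eq_of_disjoint_Ioo_recordSet (hf : Continuous f) {u v : ℝ}
    (hu : u ∈ recordSet f a b) (hv : v ∈ recordSet f a b) (huv : u < v)
    (hgap : Disjoint (Ioo u v) (recordSet f a b)) : f u = f v := by
  refine (hv.2 ⟨hu.1.1, huv.le⟩).antisymm (not_lt.1 fun hlt => ?_)
  obtain ⟨c, hc, hfc, hmax⟩ := exists_mem_Ioo_lt_isMaxOn hf huv.le hlt
  refine hgap.ne_of_mem hc ⟨⟨hu.1.1.trans hc.1.le, hc.2.le.trans hv.1.2⟩, fun s hs => ?_⟩ rfl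
  rcases le_total s u with hsu | hus
  · exact (hu.2 ⟨hs.1, hsu⟩).trans hfc.le
  · exact hmax ⟨hus, hs.2⟩

theorem exists_isMaxOn_Icc_apply_eq (hf : Continuous f) (hab : a ≤ b) (h : f a ≤ f b) :
    ∃ T ∈ Icc a b, f T = f b ∧ IsMaxOn f (Icc a T) T := by
  set S := {t ∈ Icc a b | f t = f b}
  have hSb : BddBelow S := ⟨a, fun t ht => ht.1.1⟩
  have hT : sInf S ∈ S := (isClosed_Icc.inter (isClosed_eq hf continuous_const)).csInf_mem
    ⟨b, right_mem_Icc.2 hab, rfl⟩ hSb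
  refine ⟨sInf S, hT.1, hT.2, fun s hs => show f s ≤ _ from not_lt.1 fun hlt => ?_⟩
  rw [hT.2] at hlt
  obtain ⟨t, ht, hft⟩ := intermediate_value_Icc hs.1 hf.continuousOn ⟨h, hlt.le⟩
  have hTt : sInf S ≤ t := csInf_le hSb ⟨⟨ht.1, ht.2.trans (hs.2.trans hT.1.2)⟩, hft⟩
  have hts : t = s := le_antisymm ht.2 (hs.2.trans hTt)
  exact hlt.ne' (hts ▸ hft)

theorem apply_eq_of_disjoint_Ioo_insert_recordSet (hf : Continuous f) {T c u v : ℝ}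
    (hT : T ∈ recordSet f a T) (hTc : T ≤ c) (hfT : f T = f c)
    (hu : u ∈ insert c (recordSet f a T)) (hv : v ∈ insert c (recordSet f a T)) (huv : u < v)
    (hgap : Disjoint (Ioo u v) (insert c (recordSet f a T))) : f u = f v := by
  have hgapR := hgap.mono_right (subset_insert c _)
  rcases hu with rfl | hu
  · rcases hv with rfl | hv
    · exact absurd huv (lt_irrefl _)
    · exact absurd (huv.trans_le (hv.1.2.trans hTc)) (lt_irrefl _)
  rcases hv with rfl | hv
  · rcases hu.1.2.eq_or_lt with rfl | huT
    · exact hfT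
    rcases hTc.eq_or_lt with rfl | hTv
    · exact apply_eq_of_disjoint_Ioo_recordSet hf hu hT huv hgapR
    · exact absurd rfl (hgap.ne_of_mem ⟨huT, hTv⟩ (mem_insert_of_mem _ hT))
  · exact apply_eq_of_disjoint_Ioo_recordSet hf hu hv huv hgapR

end RecordSet

theorem ae_nonneg_of_isLocalMaxOn_Iic_primitive {f : ℝ → ℝ}
    (hf : LocallyIntegrable f volume) (c : ℝ) :
    ∀ᵐ x, IsLocalMaxOn (fun t => ∫ s in c..t, f s) (Iic x) x → 0 ≤ f x := by
  filter_upwards [_root_.LocallyIntegrable.ae_hasDerivAt_integral hf] with x hx hmax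
  have hcone : (-1 : ℝ) ∈ posTangentConeAt (Iic x) x :=
    mem_posTangentConeAt_of_segment_subset
      ((convex_Iic x).segment_subset self_mem_Iic (by simp))
  simpa using hmax.hasFDerivWithinAt_nonpos (hx c).hasDerivWithinAt hcone

theorem volume_setOf_neg_inter_recordSet_primitive_eq_zero {f : ℝ → ℝ}
    (hf : LocallyIntegrable f volume) (a b : ℝ) :
    volume ({x | f x < 0} ∩ recordSet (fun t => ∫ s in a..t, f s) a b) = 0 := by
  refine measure_mono_null (fun x ⟨hfx, hx⟩ => ?_) (measure_union_null (measure_singleton a)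
    (ae_iff.1 (ae_nonneg_of_isLocalMaxOn_Iic_primitive hf a)))
  rcases hx.1.1.eq_or_lt with rfl | hax
  · exact Or.inl rfl
  · exact Or.inr fun h => (h (mem_of_superset (Icc_mem_nhdsLE hax) hx.2)).not_gt hfx

section Gaps

variable {K : Set ℝ} {a b x y : ℝ}

noncomputable def gapLeft (K : Set ℝ) (x : ℝ) : ℝ := sSup (K ∩ Iic x)

noncomputable def gapRight (K : Set ℝ) (x : ℝ) : ℝ := sInf (K ∩ Ici x)

def gap (K : Set ℝ) (x : ℝ) : Set ℝ := Ioo (gapLeft K x) (gapRight K x)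

theorem gapLeft_mem (hK : IsClosed K) (ha : a ∈ K) (hax : a ≤ x) : gapLeft K x ∈ K ∩ Iic x :=
  (hK.inter isClosed_Iic).csSup_mem ⟨a, ha, hax⟩ ⟨x, fun _ h => h.2⟩

theorem gapRight_mem (hK : IsClosed K) (hb : b ∈ K) (hxb : x ≤ b) : gapRight K x ∈ K ∩ Ici x :=
  (hK.inter isClosed_Ici).csInf_mem ⟨b, hb, hxb⟩ ⟨x, fun _ h => h.2⟩

theorem le_gapLeft (hy : y ∈ K) (hyx : y ≤ x) : y ≤ gapLeft K x :=
  le_csSup ⟨x, fun _ h => h.2⟩ ⟨hy, hyx⟩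

theorem gapRight_le (hy : y ∈ K) (hxy : x ≤ y) : gapRight K x ≤ y :=
  csInf_le ⟨x, fun _ h => h.2⟩ ⟨hy, hxy⟩

theorem disjoint_gap : Disjoint (gap K x) K := by
  refine disjoint_left.2 fun y hy hyK => ?_
  rcases le_total y x with hyx | hxy
  · exact (le_gapLeft hyK hyx).not_gt hy.1
  · exact (gapRight_le hyK hxy).not_gt hy.2

theorem self_mem_gap (hK : IsClosed K) (hx : x ∈ Icc a b \ K) (ha : a ∈ K) (hb : b ∈ K) :
    x ∈ gap K x :=
  ⟨(gapLeft_mem hK ha hx.1.1).2.lt_of_ne fun h => hx.2 (h ▸ (gapLeft_mem hK ha hx.1.1).1),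
    (gapRight_mem hK hb hx.1.2).2.lt_of_ne' fun h => hx.2 (h ▸ (gapRight_mem hK hb hx.1.2).1)⟩

theorem gap_subset (hx : x ∈ Icc a b \ K) (ha : a ∈ K) (hb : b ∈ K) : gap K x ⊆ Icc a b \ K :=
  fun _ hy => ⟨⟨(le_gapLeft ha hx.1.1).trans hy.1.le, hy.2.le.trans (gapRight_le hb hx.1.2)⟩,
    disjoint_left.1 disjoint_gap hy⟩

theorem gap_eq_of_mem (hx : x ∈ gap K x) (hy : y ∈ gap K x) : gap K y = gap K x := by
  have hout : ∀ k ∈ K, k ≤ gapLeft K x ∨ gapRight K x ≤ k := fun k hk => by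
    by_contra! h
    exact (disjoint_gap (K := K)).ne_of_mem h hk rfl
  have hIic : K ∩ Iic y = K ∩ Iic x := by
    ext k
    refine and_congr_right fun hk => ?_
    rcases hout k hk with h | h <;> simp only [mem_Iic] <;> constructor <;> intro <;>
      linarith [hx.1, hx.2, hy.1, hy.2]
  have hIci : K ∩ Ici y = K ∩ Ici x := by
    ext k
    refine and_congr_right fun hk => ?_
    rcases hout k hk with h | h <;> simp only [mem_Ici] <;> constructor <;> intro <;>
      linarith [hx.1, hx.2, hy.1, hy.2]
  simp only [gap, gapLeft, gapRight, hIic, hIci]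

theorem measure_Icc_diff_le_of_forall_Ioo (hK : IsClosed K) (ha : a ∈ K) (hb : b ∈ K)
    {μ ν : Measure ℝ}
    (h : ∀ u ∈ K, ∀ v ∈ K, u < v → Disjoint (Ioo u v) K → μ (Ioo u v) ≤ ν (Ioo u v)) :
    μ (Icc a b \ K) ≤ ν (Icc a b \ K) := by
  -- Every gap contains a rational, so the gaps through rational points exhaust `[a, b] \ K`.
  set G := gap K ∘ ((↑) : ℚ → ℝ) '' {q : ℚ | (q : ℝ) ∈ Icc a b \ K}
  have hGc : G.Countable := (Set.to_countable _).image _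
  have hGm : ∀ I ∈ G, MeasurableSet I := by
    rintro _ ⟨q, -, rfl⟩
    exact measurableSet_Ioo
  have hGd : G.Pairwise Disjoint := by
    rintro _ ⟨q, hq, rfl⟩ _ ⟨r, hr, rfl⟩ hne
    refine disjoint_left.2 fun z hzq hzr => hne ?_
    simp only [Function.comp_apply] at hzq hzr ⊢
    rw [← gap_eq_of_mem (self_mem_gap hK hq ha hb) hzq,
      gap_eq_of_mem (self_mem_gap hK hr ha hb) hzr]
  have hU : Icc a b \ K = ⋃₀ G := by
    refine subset_antisymm (fun x hx => ?_) (sUnion_subset ?_)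
    · have hxx := self_mem_gap hK hx ha hb
      obtain ⟨q, hq, hqx⟩ := exists_rat_btwn hxx.1
      have hqgap : (q : ℝ) ∈ gap K x := ⟨hq, hqx.trans hxx.2⟩
      refine ⟨gap K q, ⟨q, gap_subset hx ha hb hqgap, rfl⟩, ?_⟩
      rwa [gap_eq_of_mem hxx hqgap]
    · rintro _ ⟨q, hq, rfl⟩
      exact gap_subset hq ha hb
  rw [hU, measure_sUnion hGc hGd hGm, measure_sUnion hGc hGd hGm]
  refine ENNReal.tsum_le_tsum fun ⟨I, hI⟩ => ?_
  obtain ⟨q, hq, rfl⟩ := hI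
  have hqq := self_mem_gap hK hq ha hb
  exact h _ (gapLeft_mem hK ha hq.1.1).1 _ (gapRight_mem hK hb hq.1.2).1 (hqq.1.trans hqq.2)
    disjoint_gap

end Gaps

section Mass

variable {X Y : Set ℝ}

noncomputable def massDiff (X Y : Set ℝ) (t : ℝ) : ℝ :=
  ∫ s in (0 : ℝ)..t, (X.indicator 1 - Y.indicator 1 : ℝ → ℝ) s

theorem locallyIntegrable_indicator_sub_indicator (hX : MeasurableSet X)
    (hY : MeasurableSet Y) : LocallyIntegrable (X.indicator 1 - Y.indicator 1 : ℝ → ℝ) volume :=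
  ((locallyIntegrable_const 1).indicator hX).sub ((locallyIntegrable_const 1).indicator hY)

theorem intervalIntegrable_indicator_sub_indicator (hX : MeasurableSet X)
    (hY : MeasurableSet Y) (a b : ℝ) :
    IntervalIntegrable (X.indicator 1 - Y.indicator 1 : ℝ → ℝ) volume a b :=
  ((locallyIntegrable_indicator_sub_indicator hX hY).integrableOn_isCompact
    isCompact_uIcc).intervalIntegrable

theorem continuous_massDiff (hX : MeasurableSet X) (hY : MeasurableSet Y) :
    Continuous (massDiff X Y) :=
  intervalIntegral.continuous_primitive (intervalIntegrable_indicator_sub_indicator hX hY) 0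

theorem massDiff_sub_massDiff (hX : MeasurableSet X) (hY : MeasurableSet Y) {u v : ℝ}
    (huv : u ≤ v) :
    massDiff X Y v - massDiff X Y u = volume.real (Icc u v ∩ X) - volume.real (Icc u v ∩ Y) := by
  rw [massDiff, massDiff, intervalIntegral.integral_interval_sub_left
    (intervalIntegrable_indicator_sub_indicator hX hY 0 v)
    (intervalIntegrable_indicator_sub_indicator hX hY 0 u), intervalIntegral.integral_of_le huv,
    ← integral_Icc_eq_integral_Ioc]
  simp only [Pi.sub_apply]
  rw [integral_sub, setIntegral_indicator hX, setIntegral_indicator hY]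
  · simp
  · exact (integrableOn_const (by simp)).indicator hX
  · exact (integrableOn_const (by simp)).indicator hY

theorem volume_Icc_inter_eq_of_massDiff_eq (hX : MeasurableSet X) (hY : MeasurableSet Y)
    {u v : ℝ} (huv : u ≤ v) (h : massDiff X Y u = massDiff X Y v) :
    volume (Icc u v ∩ X) = volume (Icc u v ∩ Y) := by
  rw [← measureReal_eq_measureReal_iff (measure_inter_lt_top_of_left_ne_top
    measure_Icc_lt_top.ne).ne (measure_inter_lt_top_of_left_ne_top measure_Icc_lt_top.ne).ne,
    ← sub_eq_zero, ← massDiff_sub_massDiff hX hY huv, h, sub_self]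

theorem massDiff_zero_le_one (hX : MeasurableSet X) (hY : MeasurableSet Y)
    (hXI : X ⊆ Icc 0 1) (hYI : Y ⊆ Icc 0 1) (hYX : volume Y ≤ volume X) :
    massDiff X Y 0 ≤ massDiff X Y 1 := by
  rw [← sub_nonneg, massDiff_sub_massDiff hX hY zero_le_one, inter_eq_right.2 hXI,
    inter_eq_right.2 hYI, sub_nonneg]
  exact ENNReal.toReal_mono (ne_top_of_le_ne_top (by simp) (measure_mono hXI)) hYX

theorem volume_inter_recordSet_massDiff_eq_zero (hX : MeasurableSet X) (hY : MeasurableSet Y)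
    (hXY : Disjoint X Y) (b : ℝ) : volume (Y ∩ recordSet (massDiff X Y) 0 b) = 0 := by
  refine measure_mono_null ?_ (volume_setOf_neg_inter_recordSet_primitive_eq_zero
    (locallyIntegrable_indicator_sub_indicator hX hY) 0 b)
  rintro x ⟨hxY, hx⟩
  refine ⟨?_, hx⟩
  simp [hxY, hXY.notMem_of_mem_right hxY]

theorem volume_Ioo_inter (u v : ℝ) (X : Set ℝ) : volume (Ioo u v ∩ X) = volume (Icc u v ∩ X) :=
  measure_congr (Ioo_ae_eq_Icc.inter (ae_eq_refl X))

theorem add_three_mul_le_one_of_gaps {K : Set ℝ} (hXI : X ⊆ Icc 0 1) (hYI : Y ⊆ Icc 0 1)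
    (hK : IsClosed K) (h0K : 0 ∈ K) (h1K : 1 ∈ K) (hYK : volume (Y ∩ K) = 0)
    (hgap : ∀ u ∈ K, ∀ v ∈ K, u < v → Disjoint (Ioo u v) K →
      volume (Ioo u v ∩ X) = volume (Ioo u v ∩ Y) ∧
        4 * volume (Ioo u v ∩ X) ≤ volume (Ioo u v)) :
    volume X + 3 * volume Y ≤ 1 := by
  have hB : MeasurableSet (Icc 0 1 \ K) := measurableSet_Icc.diff hK.measurableSet
  have hcmp := fun μ ν : Measure ℝ =>
    measure_Icc_diff_le_of_forall_Ioo (μ := μ) (ν := ν) hK h0K h1K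
  have hbal : volume ((Icc 0 1 \ K) ∩ X) = volume ((Icc 0 1 \ K) ∩ Y) := by
    rw [← Measure.restrict_apply hB, ← Measure.restrict_apply hB]
    refine le_antisymm (hcmp _ _ fun u hu v hv huv hg => ?_)
      (hcmp _ _ fun u hu v hv huv hg => ?_) <;>
      rw [Measure.restrict_apply measurableSet_Ioo, Measure.restrict_apply measurableSet_Ioo,
        (hgap u hu v hv huv hg).1]
  have hsparse : 4 * volume ((Icc 0 1 \ K) ∩ X) ≤ volume (Icc 0 1 \ K) := by
    have h4 := hcmp ((4 : ENNReal) • volume.restrict X) volume fun u hu v hv huv hg => by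
      rw [Measure.smul_apply, Measure.restrict_apply measurableSet_Ioo, smul_eq_mul]
      exact (hgap u hu v hv huv hg).2
    rwa [Measure.smul_apply, Measure.restrict_apply hB, smul_eq_mul] at h4
  have hdiff : ∀ Z ⊆ Icc (0 : ℝ) 1, (Icc 0 1 \ K) ∩ Z = Z \ K := fun Z hZ => by
    rw [inter_comm, ← inter_sdiff_assoc, inter_eq_left.2 hZ]
  have hY : volume Y = volume (X \ K) := by
    rw [← measure_inter_add_sdiff Y hK.measurableSet, hYK, zero_add, ← hdiff Y hYI, ← hbal,
      hdiff X hXI]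
  calc volume X + 3 * volume Y = volume (X ∩ K) + 4 * volume (X \ K) := by
        rw [← measure_inter_add_sdiff X hK.measurableSet, hY]; ring
    _ ≤ volume (Icc 0 1 ∩ K) + volume (Icc 0 1 \ K) :=
        add_le_add (measure_mono (inter_subset_inter_left _ hXI)) (hdiff X hXI ▸ hsparse)
    _ = 1 := by rw [measure_inter_add_sdiff _ hK.measurableSet, Real.volume_Icc]; simp

end Mass

def SparseOnBalancedIntervals (X Y : Set ℝ) : Prop :=
  ∀ u v, 0 ≤ u → u < v → v ≤ 1 → volume (Icc u v ∩ X) = volume (Icc u v ∩ Y) →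
    4 * volume (Icc u v ∩ X) ≤ volume (Icc u v)

namespace SparseOnBalancedIntervals

variable {X Y : Set ℝ}

theorem symm (h : SparseOnBalancedIntervals X Y) : SparseOnBalancedIntervals Y X :=
  fun u v hu huv hv heq => by rw [heq]; exact h u v hu huv hv heq.symm

theorem add_three_mul_le_one (h : SparseOnBalancedIntervals X Y) (hX : MeasurableSet X)
    (hY : MeasurableSet Y) (hXI : X ⊆ Icc 0 1) (hYI : Y ⊆ Icc 0 1) (hXY : Disjoint X Y)
    (hYX : volume Y ≤ volume X) :
    volume X + 3 * volume Y ≤ 1 := by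
  have hd := continuous_massDiff hX hY
  obtain ⟨T, hT, hdT, hTmax⟩ :=
    exists_isMaxOn_Icc_apply_eq hd zero_le_one (massDiff_zero_le_one hX hY hXI hYI hYX)
  have hTR : T ∈ recordSet (massDiff X Y) 0 T := ⟨right_mem_Icc.2 hT.1, hTmax⟩
  set K := insert 1 (recordSet (massDiff X Y) 0 T)
  have hKI : K ⊆ Icc 0 1 :=
    insert_subset (right_mem_Icc.2 zero_le_one) fun t ht => ⟨ht.1.1, ht.1.2.trans hT.2⟩
  refine add_three_mul_le_one_of_gaps hXI hYI (isClosed_singleton.union (isClosed_recordSet hd))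
    (mem_insert_of_mem _ (left_mem_recordSet hT.1)) (mem_insert _ _) ?_ ?_
  · exact measure_mono_null (fun x ⟨hxY, hxK⟩ => hxK.imp id fun hxR => ⟨hxY, hxR⟩)
      (measure_union_null (measure_singleton 1)
        (volume_inter_recordSet_massDiff_eq_zero hX hY hXY T))
  · intro u hu v hv huv hgap
    have hbal := volume_Icc_inter_eq_of_massDiff_eq hX hY huv.le
      (apply_eq_of_disjoint_Ioo_insert_recordSet hd hTR hT.2 hdT hu hv huv hgap)
    rw [volume_Ioo_inter, volume_Ioo_inter, measure_congr Ioo_ae_eq_Icc]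
    exact ⟨hbal, h u v (hKI hu).1 huv (hKI hv).2 hbal⟩

theorem add_add_two_mul_min_le_one (h : SparseOnBalancedIntervals X Y) (hX : MeasurableSet X)
    (hY : MeasurableSet Y) (hXI : X ⊆ Icc 0 1) (hYI : Y ⊆ Icc 0 1) (hXY : Disjoint X Y) :
    volume X + volume Y + 2 * min (volume X) (volume Y) ≤ 1 := by
  rcases le_total (volume Y) (volume X) with hYX | hXY'
  · rw [min_eq_right hYX]
    calc volume X + volume Y + 2 * volume Y = volume X + 3 * volume Y := by ring
      _ ≤ 1 := h.add_three_mul_le_one hX hY hXI hYI hXY hYX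
  · rw [min_eq_left hXY']
    calc volume X + volume Y + 2 * volume X = volume Y + 3 * volume X := by ring
      _ ≤ 1 := h.symm.add_three_mul_le_one hY hX hYI hXI hXY.symm hXY'

end SparseOnBalancedIntervals

theorem volume_Icc_diff_diff_add_add {X Y : Set ℝ} (hX : MeasurableSet X)
    (hY : MeasurableSet Y) (hXI : X ⊆ Icc 0 1) (hYI : Y ⊆ Icc 0 1) (hXY : Disjoint X Y) :
    volume ((Icc 0 1 \ X) \ Y) + (volume X + volume Y) = 1 := by
  have hY' : Y ⊆ Icc 0 1 \ X := fun x hx => ⟨hYI hx, hXY.notMem_of_mem_right hx⟩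
  calc _ = volume ((Icc 0 1 \ X) \ Y) + volume ((Icc 0 1 \ X) ∩ Y) + volume (Icc 0 1 ∩ X) := by
        rw [inter_eq_right.2 hY', inter_eq_right.2 hXI]; ring
    _ = 1 := by
      rw [measure_sdiff_add_inter _ hY, add_comm, measure_inter_add_sdiff _ hX, Real.volume_Icc]
      simp

theorem stmt_13 (Ep Em : Set ℝ)
    (hEp : MeasurableSet Ep) (hEm : MeasurableSet Em)
    (hEpI : Ep ⊆ Set.Icc (0:ℝ) 1) (hEmI : Em ⊆ Set.Icc (0:ℝ) 1)
    (hdisj : Disjoint Ep Em)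
    (hmin : min (volume Ep) (volume Em) > volume ((Set.Icc (0:ℝ) 1 \ Ep) \ Em) / 2) :
    ∃ a b : ℝ, a < b ∧ Set.Icc a b ⊆ Set.Icc (0:ℝ) 1 ∧
      min (volume (Set.Icc a b ∩ Ep)) (volume (Set.Icc a b ∩ Em)) ≥
        volume (Set.Icc a b) / 4 := by
  by_contra! hcon
  have hsparse : SparseOnBalancedIntervals Ep Em := fun u v hu huv hv heq => by
    have h := hcon u v huv (Icc_subset_Icc hu hv)
    rw [← heq, min_self, ENNReal.lt_div_iff_mul_lt (by norm_num) (by norm_num)] at h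
    exact (mul_comm (4 : ENNReal) _ ▸ h).le
  have hrest := volume_Icc_diff_diff_add_add hEp hEm hEpI hEmI hdisj
  rw [gt_iff_lt, ENNReal.div_lt_iff (by norm_num) (by norm_num), mul_comm] at hmin
  refine hmin.not_ge (ENNReal.le_of_add_le_add_left (a := volume Ep + volume Em) ?_ ?_)
  · exact ne_top_of_le_ne_top ENNReal.one_ne_top (hrest ▸ le_add_self)
  · rw [add_comm _ (volume ((Icc 0 1 \ Ep) \ Em)), hrest]
    exact hsparse.add_add_two_mul_min_le_one hEp hEm hEpI hEmI hdisj
end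

section
/- Let $d \ge 1$ and suppose $F_+, F_-$ are disjoint measurable subsets of $[0,1]^d$, both of positive measure, with $\lambda([0,1]^d \setminus F_+ \setminus F_-) = 0$. Then there exists a cube $W \subseteq [0,1]^d$ with $\lambda(W \cap F_+) = \lambda(W \setminus F_+) = \frac{1}{2}\lambda(W)$, and consequently $\min\{\lambda(W \cap F_+), \lambda(W \cap F_-)\} = \frac{1}{2}\lambda(W)$. -/
open MeasureTheory Set Metric Filter
open scoped ENNReal

lemma vol_ball_eq {d : ℕ} (x : Fin d → ℝ) {s : ℝ} (hs : 0 ≤ s) :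
    volume (Metric.closedBall x s) = ENNReal.ofReal ((2 * s) ^ d) := by
  rw [Real.volume_pi_closedBall x hs, Fintype.card_fin]

lemma cont_aux {d : ℕ} (F : Set (Fin d → ℝ)) {r : ℝ} (hr : 0 < r) :
    Continuous fun x : Fin d → ℝ => (volume (Metric.closedBall x r ∩ F)).toReal := by
  have hfin : ∀ (x : Fin d → ℝ) (s : ℝ), volume (Metric.closedBall x s ∩ F) ≠ ⊤ :=
    fun x s => ne_top_of_le_ne_top measure_closedBall_lt_top.ne (measure_mono inter_subset_left)
  have key : ∀ x z : Fin d → ℝ, dist x z ≤ r →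
      (volume (Metric.closedBall x r ∩ F)).toReal ≤ (volume (Metric.closedBall z r ∩ F)).toReal
        + ((2 * (r + dist x z)) ^ d - (2 * (r - dist x z)) ^ d) := by
    intro x z hδ
    set δ := dist x z with hδdef
    have hδ0 : 0 ≤ δ := dist_nonneg
    have hsub : Metric.closedBall x r ∩ F ⊆ (Metric.closedBall z r ∩ F) ∪
        (Metric.closedBall z (r + δ) \ Metric.closedBall z (r - δ)) := by
      intro w hw
      by_cases h : w ∈ Metric.closedBall z r
      · exact Or.inl ⟨h, hw.2⟩
      · refine Or.inr ⟨?_, ?_⟩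
        · have h1 : dist w x ≤ r := Metric.mem_closedBall.1 hw.1
          have h2 : dist w z ≤ dist w x + dist x z := dist_triangle _ _ _
          exact Metric.mem_closedBall.2 (by linarith)
        · intro hmem
          rw [Metric.mem_closedBall] at hmem h
          push_neg at h
          linarith
    have h1 : volume (Metric.closedBall x r ∩ F) ≤ volume (Metric.closedBall z r ∩ F) +
        volume (Metric.closedBall z (r + δ) \ Metric.closedBall z (r - δ)) :=
      (measure_mono hsub).trans (measure_union_le _ _)
    have hdiff : (volume (Metric.closedBall z (r + δ) \ Metric.closedBall z (r - δ))).toReal =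
        (2 * (r + δ)) ^ d - (2 * (r - δ)) ^ d := by
      rw [measure_diff (Metric.closedBall_subset_closedBall (by linarith))
        measurableSet_closedBall.nullMeasurableSet measure_closedBall_lt_top.ne,
        vol_ball_eq _ (by linarith), vol_ball_eq _ (by linarith),
        ← ENNReal.ofReal_sub _ (pow_nonneg (by linarith) d), ENNReal.toReal_ofReal]
      have : (2 * (r - δ)) ^ d ≤ (2 * (r + δ)) ^ d := by
        apply pow_le_pow_left₀ (by linarith) (by linarith)
      linarith
    have h2 := ENNReal.toReal_mono (by
      refine ENNReal.add_ne_top.2 ⟨hfin z r, ?_⟩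
      exact ne_top_of_le_ne_top measure_closedBall_lt_top.ne (measure_mono diff_subset)) h1
    rw [ENNReal.toReal_add (hfin z r) (ne_top_of_le_ne_top measure_closedBall_lt_top.ne
      (measure_mono diff_subset)), hdiff] at h2
    linarith
  rw [continuous_iff_continuousAt]
  intro y
  rw [ContinuousAt, tendsto_iff_dist_tendsto_zero]
  have hg : Tendsto (fun x : Fin d → ℝ =>
      (2 * (r + dist x y)) ^ d - (2 * (r - dist x y)) ^ d) (nhds y) (nhds 0) := by
    have hc : Continuous (fun x : Fin d → ℝ =>
        (2 * (r + dist x y)) ^ d - (2 * (r - dist x y)) ^ d) := by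
      fun_prop
    have := hc.tendsto y
    simpa using this
  refine squeeze_zero' (Eventually.of_forall fun _ => dist_nonneg) ?_ hg
  filter_upwards [Metric.closedBall_mem_nhds y hr] with x hx
  have hxy : dist x y ≤ r := Metric.mem_closedBall.1 hx
  have h1 := key x y hxy
  have h2 := key y x (by rwa [dist_comm])
  rw [dist_comm y x] at h2
  rw [Real.dist_eq, abs_sub_le_iff]
  constructor <;> linarith

lemma isCube_closedBall {d : ℕ} (x : Fin d → ℝ) {r : ℝ} (hr : 0 < r) :
    IsCube (Metric.closedBall x r) := by
  refine ⟨fun j => x j - r, 2 * r, by linarith, ?_⟩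
  rw [closedBall_pi _ hr.le]
  exact Set.pi_congr rfl fun j _ => by rw [Real.closedBall_eq_Icc]; ring_nf

theorem stmt_18 (d : ℕ) (hd : 1 ≤ d) (Fp Fm : Set (Fin d → ℝ))
    (hFp : MeasurableSet Fp) (hFm : MeasurableSet Fm)
    (hFpI : Fp ⊆ Set.univ.pi fun _ : Fin d => Set.Icc (0:ℝ) 1)
    (hFmI : Fm ⊆ Set.univ.pi fun _ : Fin d => Set.Icc (0:ℝ) 1)
    (hdisj : Disjoint Fp Fm)
    (hFp0 : 0 < volume Fp) (hFm0 : 0 < volume Fm)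
    (hnull : volume (((Set.univ.pi fun _ : Fin d => Set.Icc (0:ℝ) 1) \ Fp) \ Fm) = 0) :
    ∃ W : Set (Fin d → ℝ), IsCube W ∧ W ⊆ (Set.univ.pi fun _ : Fin d => Set.Icc (0:ℝ) 1) ∧
      volume (W ∩ Fp) = volume W / 2 ∧ volume (W \ Fp) = volume W / 2 ∧
      min (volume (W ∩ Fp)) (volume (W ∩ Fm)) = volume W / 2 := by
  classical
  set I : Set (Fin d → ℝ) := Set.univ.pi fun _ : Fin d => Set.Icc (0:ℝ) 1 with hIdef
  set O : Set (Fin d → ℝ) := Set.univ.pi fun _ : Fin d => Set.Ioo (0:ℝ) 1 with hOdef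
  have hOI : O ⊆ I := Set.pi_mono fun i _ => Set.Ioo_subset_Icc_self
  have hOmeas : MeasurableSet O := MeasurableSet.univ_pi fun _ => measurableSet_Ioo
  have hIvol : volume I = 1 := by
    rw [hIdef, volume_pi_pi]
    simp [Real.volume_Icc]
  have hOvol : volume O = 1 := by
    rw [hOdef, volume_pi_pi]
    simp [Real.volume_Ioo]
  have hbd : volume (I \ O) = 0 := by
    rw [measure_diff hOI hOmeas.nullMeasurableSet (by rw [hOvol]; exact ENNReal.one_ne_top), hIvol, hOvol,
      tsub_self]
  -- density points
  have hdens := Besicovitch.ae_tendsto_measure_inter_div_of_measurableSet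
    (volume : Measure (Fin d → ℝ)) hFp
  have hdensm := Besicovitch.ae_tendsto_measure_inter_div_of_measurableSet
    (volume : Measure (Fin d → ℝ)) hFm
  rw [MeasureTheory.ae_iff] at hdens hdensm
  -- pick p
  have hvp : volume (Fp \ ({x | ¬ Tendsto (fun r => volume (Fp ∩ Metric.closedBall x r) /
      volume (Metric.closedBall x r)) (nhdsWithin 0 (Set.Ioi 0))
      (nhds (Fp.indicator 1 x))} ∪ (I \ O))) = volume Fp := by
    apply measure_diff_null
    exact measure_union_null hdens hbd
  have hpne : (Fp \ ({x | ¬ Tendsto (fun r => volume (Fp ∩ Metric.closedBall x r) /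
      volume (Metric.closedBall x r)) (nhdsWithin 0 (Set.Ioi 0))
      (nhds (Fp.indicator 1 x))} ∪ (I \ O))).Nonempty := by
    apply nonempty_of_measure_ne_zero
    rw [hvp]; exact hFp0.ne'
  obtain ⟨p, hpF, hpbad⟩ := hpne
  have hpO : p ∈ O := by
    by_contra h
    exact hpbad (Or.inr ⟨hFpI hpF, h⟩)
  have hptend : Tendsto (fun r => volume (Fp ∩ Metric.closedBall p r) /
      volume (Metric.closedBall p r)) (nhdsWithin 0 (Set.Ioi 0)) (nhds 1) := by
    have h1 : ¬ p ∈ {x | ¬ Tendsto (fun r => volume (Fp ∩ Metric.closedBall x r) /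
        volume (Metric.closedBall x r)) (nhdsWithin 0 (Set.Ioi 0))
        (nhds (Fp.indicator 1 x))} := fun h => hpbad (Or.inl h)
    simp only [Set.mem_setOf_eq, not_not] at h1
    rwa [Set.indicator_of_mem hpF] at h1
  -- pick q
  have hvq : volume (Fm \ ({x | ¬ Tendsto (fun r => volume (Fm ∩ Metric.closedBall x r) /
      volume (Metric.closedBall x r)) (nhdsWithin 0 (Set.Ioi 0))
      (nhds (Fm.indicator 1 x))} ∪ (I \ O))) = volume Fm := by
    apply measure_diff_null
    exact measure_union_null hdensm hbd
  have hqne : (Fm \ ({x | ¬ Tendsto (fun r => volume (Fm ∩ Metric.closedBall x r) /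
      volume (Metric.closedBall x r)) (nhdsWithin 0 (Set.Ioi 0))
      (nhds (Fm.indicator 1 x))} ∪ (I \ O))).Nonempty := by
    apply nonempty_of_measure_ne_zero
    rw [hvq]; exact hFm0.ne'
  obtain ⟨q, hqF, hqbad⟩ := hqne
  have hqO : q ∈ O := by
    by_contra h
    exact hqbad (Or.inr ⟨hFmI hqF, h⟩)
  have hqtend : Tendsto (fun r => volume (Fm ∩ Metric.closedBall q r) /
      volume (Metric.closedBall q r)) (nhdsWithin 0 (Set.Ioi 0)) (nhds 1) := by
    have h1 : ¬ q ∈ {x | ¬ Tendsto (fun r => volume (Fm ∩ Metric.closedBall x r) /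
        volume (Metric.closedBall x r)) (nhdsWithin 0 (Set.Ioi 0))
        (nhds (Fm.indicator 1 x))} := fun h => hqbad (Or.inl h)
    simp only [Set.mem_setOf_eq, not_not] at h1
    rwa [Set.indicator_of_mem hqF] at h1
  -- coordinates bounds
  have hne : Nonempty (Fin d) := ⟨⟨0, hd⟩⟩
  have hpO' : ∀ j, 0 < p j ∧ p j < 1 := fun j => hpO j (Set.mem_univ j)
  have hqO' : ∀ j, 0 < q j ∧ q j < 1 := fun j => hqO j (Set.mem_univ j)
  set ε : ℝ := Finset.univ.inf' (Finset.univ_nonempty) fun j =>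
    min (min (p j) (q j)) (min (1 - p j) (1 - q j)) with hεdef
  have hε : 0 < ε := by
    rw [hεdef, Finset.lt_inf'_iff]
    intro j _
    have h1 := hpO' j
    have h2 := hqO' j
    simp only [lt_min_iff]
    constructor <;> constructor <;> linarith [h1.1, h1.2, h2.1, h2.2]
  have hεle : ∀ j, ε ≤ min (min (p j) (q j)) (min (1 - p j) (1 - q j)) := fun j =>
    Finset.inf'_le _ (Finset.mem_univ j)
  -- choose r
  have h12 : (1:ℝ≥0∞)/2 < 1 := by norm_num
  have e1 : ∀ᶠ r in nhdsWithin (0:ℝ) (Set.Ioi 0), (1:ℝ≥0∞)/2 <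
      volume (Fp ∩ Metric.closedBall p r) / volume (Metric.closedBall p r) :=
    hptend.eventually_const_lt h12
  have e2 : ∀ᶠ r in nhdsWithin (0:ℝ) (Set.Ioi 0), (1:ℝ≥0∞)/2 <
      volume (Fm ∩ Metric.closedBall q r) / volume (Metric.closedBall q r) :=
    hqtend.eventually_const_lt h12
  have e3 : ∀ᶠ r in nhdsWithin (0:ℝ) (Set.Ioi 0), r < ε := by
    filter_upwards [Ioo_mem_nhdsGT_of_mem (Set.mem_Ico.2 ⟨le_refl 0, hε⟩)] with r hr
    exact hr.2
  have e4 : ∀ᶠ r in nhdsWithin (0:ℝ) (Set.Ioi 0), 0 < r := by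
    filter_upwards [self_mem_nhdsWithin] with r hr
    exact hr
  obtain ⟨r, hr1, hr2, hrε, hr0⟩ := (e1.and (e2.and (e3.and e4))).exists
  -- ball volume facts
  have hvB : ∀ x : Fin d → ℝ, volume (Metric.closedBall x r) = ENNReal.ofReal ((2*r)^d) :=
    fun x => vol_ball_eq x hr0.le
  have hvB0 : (ENNReal.ofReal ((2*r)^d)) ≠ 0 := (ENNReal.ofReal_pos.2 (by positivity)).ne'
  have hvBt : (ENNReal.ofReal ((2*r)^d)) ≠ ⊤ := ENNReal.ofReal_ne_top
  have hvB2t : ENNReal.ofReal ((2*r)^d) / 2 ≠ ⊤ := ne_top_of_le_ne_top hvBt ENNReal.half_le_self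
  -- convert ratios
  have ratio_gt : ∀ (F : Set (Fin d → ℝ)) (x : Fin d → ℝ),
      (1:ℝ≥0∞)/2 < volume (F ∩ Metric.closedBall x r) / volume (Metric.closedBall x r) →
      ENNReal.ofReal ((2*r)^d) / 2 < volume (F ∩ Metric.closedBall x r) := by
    intro F x hx
    rw [hvB x] at hx
    have h1 : ENNReal.ofReal ((2*r)^d) * ((1:ℝ≥0∞)/2) < ENNReal.ofReal ((2*r)^d) *
        (volume (F ∩ Metric.closedBall x r) / ENNReal.ofReal ((2*r)^d)) :=
      (ENNReal.mul_lt_mul_iff_right hvB0 hvBt).2 hx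
    rwa [ENNReal.mul_div_cancel hvB0 hvBt, mul_one_div] at h1
  have hgtp : ENNReal.ofReal ((2*r)^d) / 2 < volume (Fp ∩ Metric.closedBall p r) :=
    ratio_gt Fp p hr1
  have hgtq : ENNReal.ofReal ((2*r)^d) / 2 < volume (Fm ∩ Metric.closedBall q r) :=
    ratio_gt Fm q hr2
  have hltq : volume (Fp ∩ Metric.closedBall q r) < ENNReal.ofReal ((2*r)^d) / 2 := by
    by_contra h
    push_neg at h
    have hsum : volume (Fp ∩ Metric.closedBall q r) + volume (Fm ∩ Metric.closedBall q r) ≤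
        ENNReal.ofReal ((2*r)^d) := by
      rw [← measure_union (hdisj.mono inter_subset_left inter_subset_left)
        (hFm.inter measurableSet_closedBall), ← hvB q]
      exact measure_mono (Set.union_subset inter_subset_right inter_subset_right)
    have hlt : ENNReal.ofReal ((2*r)^d) < volume (Fp ∩ Metric.closedBall q r) +
        volume (Fm ∩ Metric.closedBall q r) := by
      calc ENNReal.ofReal ((2*r)^d)
          = ENNReal.ofReal ((2*r)^d) / 2 + ENNReal.ofReal ((2*r)^d) / 2 :=
            (ENNReal.add_halves _).symm
        _ < _ := ENNReal.add_lt_add_of_le_of_lt hvB2t h hgtq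
    exact absurd (hlt.trans_le hsum) (lt_irrefl _)
  -- path and IVT
  set path : ℝ → (Fin d → ℝ) := fun t => fun j => p j + t * (q j - p j) with hpathdef
  have hpathc : Continuous path := by
    apply continuous_pi
    intro j
    fun_prop
  set φ : ℝ → ℝ := fun t => (volume (Metric.closedBall (path t) r ∩ Fp)).toReal with hφdef
  have hφc : Continuous φ := (cont_aux Fp hr0).comp hpathc
  have hpath0 : path 0 = p := by funext j; simp [hpathdef]
  have hpath1 : path 1 = q := by funext j; simp [hpathdef]
  have hfinball : ∀ x : Fin d → ℝ, volume (Metric.closedBall x r ∩ Fp) ≠ ⊤ :=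
    fun x => ne_top_of_le_ne_top measure_closedBall_lt_top.ne (measure_mono inter_subset_left)
  set half : ℝ := (2*r)^d / 2 with hhalfdef
  have htoRealhalf : (ENNReal.ofReal ((2*r)^d) / 2).toReal = half := by
    rw [ENNReal.toReal_div, ENNReal.toReal_ofReal (by positivity)]
    simp [hhalfdef]
  have hφ0 : half < φ 0 := by
    rw [hφdef]
    simp only [hpath0]
    rw [← htoRealhalf, Set.inter_comm]
    exact ENNReal.toReal_lt_toReal hvB2t (by rw [Set.inter_comm]; exact hfinball p) |>.2 hgtp
  have hφ1 : φ 1 < half := by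
    rw [hφdef]
    simp only [hpath1]
    rw [← htoRealhalf]
    exact ENNReal.toReal_lt_toReal (hfinball q) hvB2t |>.2
      (by rw [Set.inter_comm]; exact hltq)
  have hIVT := intermediate_value_Icc' (by norm_num : (0:ℝ) ≤ 1) hφc.continuousOn
  have hmem : half ∈ Set.Icc (φ 1) (φ 0) := ⟨hφ1.le, hφ0.le⟩
  obtain ⟨t, ht01, htval⟩ := hIVT hmem
  -- the cube
  set W : Set (Fin d → ℝ) := Metric.closedBall (path t) r with hWdef
  have hWcube : IsCube W := isCube_closedBall _ hr0
  have hWvol : volume W = ENNReal.ofReal ((2*r)^d) := hvB _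
  have hWI : W ⊆ I := by
    intro z hz
    intro j _
    have hdist : ∀ i, dist (z i) (path t i) ≤ r :=
      (dist_pi_le_iff hr0.le).1 (Metric.mem_closedBall.1 hz)
    have hj := hdist j
    rw [Real.dist_eq, abs_le] at hj
    have hεj := hεle j
    simp only [le_min_iff] at hεj
    obtain ⟨⟨hεp, hεq⟩, ⟨hεp', hεq'⟩⟩ := hεj
    have hbounds : min (p j) (q j) ≤ path t j ∧ path t j ≤ max (p j) (q j) := by
      rcases le_total (p j) (q j) with h | h
      · constructor
        · rw [min_eq_left h]
          have : 0 ≤ t * (q j - p j) := mul_nonneg ht01.1 (by linarith)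
          simp only [hpathdef]; linarith
        · rw [max_eq_right h]
          have : t * (q j - p j) ≤ 1 * (q j - p j) :=
            mul_le_mul_of_nonneg_right ht01.2 (by linarith)
          simp only [hpathdef]; linarith
      · constructor
        · rw [min_eq_right h]
          have : 1 * (q j - p j) ≤ t * (q j - p j) :=
            mul_le_mul_of_nonpos_right ht01.2 (by linarith)
          simp only [hpathdef]; linarith
        · rw [max_eq_left h]
          have : t * (q j - p j) ≤ 0 := mul_nonpos_of_nonneg_of_nonpos ht01.1 (by linarith)
          simp only [hpathdef]; linarith
    have hmin : ε ≤ min (p j) (q j) := le_min hεp hεq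
    have hmax : max (p j) (q j) ≤ 1 - ε := max_le (by linarith) (by linarith)
    constructor <;> [skip; skip] <;> linarith [hbounds.1, hbounds.2]
  have hWhalf : volume W / 2 = ENNReal.ofReal half := by
    rw [hWvol, hhalfdef]
    rw [ENNReal.ofReal_div_of_pos two_pos, ENNReal.ofReal_ofNat]
  have hWFp : volume (W ∩ Fp) = volume W / 2 := by
    have hfin := hfinball (path t)
    rw [hWhalf, ← htval, hφdef]
    exact (ENNReal.ofReal_toReal hfin).symm
  have hWFpdiff : volume (W \ Fp) = volume W / 2 := by
    have hsplit : volume (W ∩ Fp) + volume (W \ Fp) = volume W := measure_inter_add_diff W hFp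
    rw [hWFp] at hsplit
    have h2 : volume W / 2 + volume (W \ Fp) = volume W / 2 + volume W / 2 := by
      rw [hsplit, ENNReal.add_halves]
    exact (ENNReal.add_right_inj (by rw [hWvol]; exact hvB2t)).1 h2
  have hWFm : volume (W ∩ Fm) = volume (W \ Fp) := by
    have h0 : volume ((W \ Fp) \ Fm) = 0 := by
      apply measure_mono_null _ hnull
      exact diff_subset_diff_left (diff_subset_diff_left hWI)
    have heq : (W \ Fp) ∩ Fm = W ∩ Fm := by
      ext z
      constructor
      · rintro ⟨⟨h1, _⟩, h2⟩; exact ⟨h1, h2⟩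
      · rintro ⟨h1, h2⟩
        exact ⟨⟨h1, fun hp => Set.disjoint_left.mp hdisj hp h2⟩, h2⟩
    have hsum2 : volume (W \ Fp ∩ Fm) + volume ((W \ Fp) \ Fm) = volume (W \ Fp) :=
      measure_inter_add_diff (W \ Fp) hFm
    rw [h0, add_zero, heq] at hsum2
    exact hsum2
  refine ⟨W, hWcube, hWI, hWFp, hWFpdiff, ?_⟩
  rw [hWFp, hWFm, hWFpdiff, min_self]
end
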